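/- arXiv:2305.17342 — 7 statements merged into one kernel-verified Lean document; each statement's English description precedes it below -/
import Mathlib

section
/- Let S be a finite nonempty set, let P and Q be column-stochastic matrices indexed by S × S, let γ ∈ [0,1), and let c ≥ 0 be such that ∑_{s'} |P(s', s) - Q(s', s)| ≤ c for every s ∈ S. Then for every vector x ∈ ℝ^S, ‖((I - γP)⁻¹ - (I - γQ)⁻¹) x‖₁ ≤ (γ c / (1-γ)²) · ‖x‖₁. -/
open scoped BigOperators
open Matrix Finset

/-!
The ℓ¹ operator norm of a matrix is its largest column sum of absolute values, so a
column-stochastic `P` is an ℓ¹ contraction. Hence `‖(1 - γP) v‖₁ ≥ (1 - γ) ‖v‖₁`, which makes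
`1 - γP` invertible with `‖(1 - γP)⁻¹‖ ≤ 1 / (1 - γ)`. The resolvent identity
`(1 - γP)⁻¹ - (1 - γQ)⁻¹ = (1 - γP)⁻¹ (γ (P - Q)) (1 - γQ)⁻¹` then bounds the difference by
`(1 - γ)⁻¹ · γc · (1 - γ)⁻¹`.
-/

theorem sum_abs_mulVec_le {m n : Type*} [Fintype m] [Fintype n] (M : Matrix m n ℝ) {K : ℝ}
    (hM : ∀ t, ∑ s, |M s t| ≤ K) (x : n → ℝ) :
    ∑ s, |(M *ᵥ x) s| ≤ K * ∑ t, |x t| :=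
  calc ∑ s, |(M *ᵥ x) s| ≤ ∑ s, ∑ t, |M s t| * |x t| := by
        gcongr with s
        simpa only [mulVec, dotProduct, abs_mul] using abs_sum_le_sum_abs (fun t => M s t * x t) _
    _ = ∑ t, (∑ s, |M s t|) * |x t| := by simp only [sum_comm (γ := m), sum_mul]
    _ ≤ ∑ t, K * |x t| := by gcongr with t; exact hM t
    _ = K * ∑ t, |x t| := (mul_sum _ _ _).symm

section Resolvent

variable {S : Type*} [Fintype S] {P : Matrix S S ℝ} {γ : ℝ}

theorem sum_abs_col_le_one_of_stochastic (hP0 : ∀ s t, 0 ≤ P s t) (hP1 : ∀ t, ∑ s, P s t = 1)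
    (t : S) : ∑ s, |P s t| ≤ 1 :=
  (sum_congr rfl fun s _ => abs_of_nonneg (hP0 s t)).trans_le (hP1 t).le

variable [DecidableEq S]

theorem one_sub_mul_sum_abs_le_sum_abs_one_sub_smul_mulVec (hP : ∀ t, ∑ s, |P s t| ≤ 1)
    (hγ : 0 ≤ γ) (v : S → ℝ) :
    (1 - γ) * ∑ s, |v s| ≤ ∑ s, |((1 - γ • P) *ᵥ v) s| := by
  have hPv := sum_abs_mulVec_le P hP v
  have hv : ∀ s, v s = ((1 - γ • P) *ᵥ v) s + γ * (P *ᵥ v) s := fun s => by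
    simp [sub_mulVec, smul_mulVec]
  have htriangle : ∑ s, |v s| ≤ ∑ s, |((1 - γ • P) *ᵥ v) s| + γ * ∑ s, |(P *ᵥ v) s| := by
    rw [mul_sum, ← sum_add_distrib]
    gcongr with s
    rw [hv s]
    exact (abs_add_le _ _).trans_eq (by rw [abs_mul, abs_of_nonneg hγ])
  linarith [mul_le_mul_of_nonneg_left hPv hγ]

theorem isUnit_one_sub_smul (hP : ∀ t, ∑ s, |P s t| ≤ 1) (hγ0 : 0 ≤ γ) (hγ1 : γ < 1) :
    IsUnit (1 - γ • P) := by
  rw [isUnit_iff_isUnit_det, isUnit_iff_ne_zero, Ne, ← exists_mulVec_eq_zero_iff]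
  rintro ⟨v, hv0, hv⟩
  have hbound := one_sub_mul_sum_abs_le_sum_abs_one_sub_smul_mulVec hP hγ0 v
  simp only [hv, Pi.zero_apply, abs_zero, sum_const_zero] at hbound
  have hsum : ∑ s, |v s| = 0 :=
    le_antisymm (nonpos_of_mul_nonpos_right hbound (sub_pos.2 hγ1))
      (sum_nonneg fun s _ => abs_nonneg _)
  refine hv0 (funext fun s => abs_eq_zero.1 ?_)
  exact (sum_eq_zero_iff_of_nonneg fun s _ => abs_nonneg _).1 hsum s (mem_univ s)

theorem sum_abs_inv_one_sub_smul_mulVec_le (hP : ∀ t, ∑ s, |P s t| ≤ 1) (hγ0 : 0 ≤ γ)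
    (hγ1 : γ < 1) (y : S → ℝ) :
    ∑ s, |((1 - γ • P)⁻¹ *ᵥ y) s| ≤ (1 - γ)⁻¹ * ∑ s, |y s| := by
  have hdet := (isUnit_iff_isUnit_det _).1 (isUnit_one_sub_smul hP hγ0 hγ1)
  have hbound := one_sub_mul_sum_abs_le_sum_abs_one_sub_smul_mulVec hP hγ0 ((1 - γ • P)⁻¹ *ᵥ y)
  rw [mulVec_mulVec, mul_nonsing_inv _ hdet, one_mulVec] at hbound
  exact (le_inv_mul_iff₀ (sub_pos.2 hγ1)).2 hbound

end Resolvent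

theorem resolvent_difference_one_norm_bound_general {S : Type*} [Fintype S]
    [DecidableEq S]
    (P Q : Matrix S S ℝ)
    (hP0 : ∀ s' s, 0 ≤ P s' s) (hP1 : ∀ s, ∑ s', P s' s = 1)
    (hQ0 : ∀ s' s, 0 ≤ Q s' s) (hQ1 : ∀ s, ∑ s', Q s' s = 1)
    (γ : ℝ) (hγ0 : 0 ≤ γ) (hγ1 : γ < 1)
    (c : ℝ) (hc : 0 ≤ c) (hPQ : ∀ s, ∑ s', |P s' s - Q s' s| ≤ c) :
    ∀ x : S → ℝ,
      ∑ s, |(((1 - γ • P)⁻¹ - (1 - γ • Q)⁻¹) *ᵥ x) s| ≤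
        (γ * c / (1 - γ) ^ 2) * ∑ s, |x s| := by
  intro x
  have hP := sum_abs_col_le_one_of_stochastic hP0 hP1
  have hQ := sum_abs_col_le_one_of_stochastic hQ0 hQ1
  have hdiff (t : S) : ∑ s, |(γ • (P - Q)) s t| ≤ γ * c := by
    simp only [Matrix.smul_apply, Matrix.sub_apply, smul_eq_mul, abs_mul, abs_of_nonneg hγ0,
      ← mul_sum]
    exact mul_le_mul_of_nonneg_left (hPQ t) hγ0
  rw [inv_sub_inv (iff_of_true (isUnit_one_sub_smul hP hγ0 hγ1) (isUnit_one_sub_smul hQ hγ0 hγ1)),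
    show (1 - γ • Q) - (1 - γ • P) = γ • (P - Q) by module]
  calc _ = ∑ s, |((1 - γ • P)⁻¹ *ᵥ ((γ • (P - Q)) *ᵥ ((1 - γ • Q)⁻¹ *ᵥ x))) s| := by
        simp only [mulVec_mulVec, Matrix.mul_assoc]
    _ ≤ (1 - γ)⁻¹ * ∑ s, |((γ • (P - Q)) *ᵥ ((1 - γ • Q)⁻¹ *ᵥ x)) s| :=
        sum_abs_inv_one_sub_smul_mulVec_le hP hγ0 hγ1 _
    _ ≤ (1 - γ)⁻¹ * (γ * c * ∑ s, |((1 - γ • Q)⁻¹ *ᵥ x) s|) := by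
        gcongr; exact sum_abs_mulVec_le _ hdiff _
    _ ≤ (1 - γ)⁻¹ * (γ * c * ((1 - γ)⁻¹ * ∑ s, |x s|)) := by
        gcongr; exact sum_abs_inv_one_sub_smul_mulVec_le hQ hγ0 hγ1 x
    _ = (γ * c / (1 - γ) ^ 2) * ∑ s, |x s| := by field_simp

/-- for column-stochastic matrices `P, Q` with columnwise ℓ₁ distance at
most `c`, and `γ ∈ [0,1)`, one has
`‖((I - γP)⁻¹ - (I - γQ)⁻¹) x‖₁ ≤ (γ c / (1-γ)²) ‖x‖₁`. -/
theorem resolvent_difference_one_norm_bound {S : Type*} [Fintype S] [Nonempty S]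
    [DecidableEq S]
    (P Q : Matrix S S ℝ)
    (hP0 : ∀ s' s, 0 ≤ P s' s) (hP1 : ∀ s, ∑ s', P s' s = 1)
    (hQ0 : ∀ s' s, 0 ≤ Q s' s) (hQ1 : ∀ s, ∑ s', Q s' s = 1)
    (γ : ℝ) (hγ0 : 0 ≤ γ) (hγ1 : γ < 1)
    (c : ℝ) (hc : 0 ≤ c) (hPQ : ∀ s, ∑ s', |P s' s - Q s' s| ≤ c) :
    ∀ x : S → ℝ,
      ∑ s, |(((1 - γ • P)⁻¹ - (1 - γ • Q)⁻¹) *ᵥ x) s| ≤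
        (γ * c / (1 - γ) ^ 2) * ∑ s, |x s| :=
  resolvent_difference_one_norm_bound_general P Q hP0 hP1 hQ0 hQ1 γ hγ0 hγ1 c hc hPQ
end

section
/- (Proposition 2: bounded policy discrepancy induces bounded state distribution discrepancy.) In a finite two-player Markov game with discount factor γ ∈ [0,1) and initial distribution ρ, fix ε_π ∈ [0,1] and a victim policy π̂_ν, and let π_α, π̂_α be two attacker policies with D_TV^max(π_α, π̂_α) ≤ ε_π. Then ‖d_ρ^{π̂_ν, π̂_α} - d_ρ^{π̂_ν, π_α}‖₁ ≤ 2γε_π / (1-γ). -/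
/-!
Both state visitations are fixed points of the discounted flow equation
`d = (1 - γ) ρ + γ K d`, where `K` is the (column-stochastic) induced transition matrix.
Subtracting the equations for the two attacker policies gives
`d̂ - d = γ M̂ (d̂ - d) + γ (M̂ - M) d`. A column-stochastic matrix does not expand the ℓ¹ norm,
each column of `M̂ - M` has ℓ¹ norm at most `2 ε` (it is a mixture of `P`-columns weighted by
`π̂_α - π_α`), and the flow equation forces `‖d‖₁ ≤ ‖ρ‖₁ = 1`.
Hence `(1 - γ) ‖d̂ - d‖₁ ≤ 2 γ ε`.
-/

open scoped BigOperators
open Matrix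

/-- The state-transition matrix induced by a joint policy. -/
noncomputable def inducedMatrix {S Av Aa : Type*} [Fintype Av] [Fintype Aa]
    (P : S → Av → Aa → S → ℝ) (pinu : S → Av → ℝ) (pialpha : S → Aa → ℝ) :
    Matrix S S ℝ :=
  Matrix.of fun s' s => ∑ av, ∑ aa, pinu s av * pialpha s aa * P s av aa s'

/-- The stationary state visitation `d_ρ = (1-γ) ∑_t γ^t P^t ρ`. -/
noncomputable def stateVisitation {S Av Aa : Type*} [Fintype S] [DecidableEq S]
    [Fintype Av] [Fintype Aa]
    (P : S → Av → Aa → S → ℝ) (γ : ℝ) (ρ : S → ℝ)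
    (pinu : S → Av → ℝ) (pialpha : S → Aa → ℝ) : S → ℝ :=
  (1 - γ) • ∑' t : ℕ, γ ^ t • ((inducedMatrix P pinu pialpha ^ t) *ᵥ ρ)

section L1Norm

variable {m n : Type*} [Fintype m] [Fintype n]

theorem sum_abs_mulVec_le_s5 {D : Matrix m n ℝ} {c : ℝ} (hD : ∀ j, ∑ i, |D i j| ≤ c)
    (x : n → ℝ) : ∑ i, |(D *ᵥ x) i| ≤ c * ∑ j, |x j| :=
  calc ∑ i, |(D *ᵥ x) i| ≤ ∑ i, ∑ j, |D i j| * |x j| :=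
        Finset.sum_le_sum fun i _ => (Finset.abs_sum_le_sum_abs _ _).trans_eq <| by
          simp only [abs_mul]
    _ = ∑ j, (∑ i, |D i j|) * |x j| := by
        rw [Finset.sum_comm]; simp only [Finset.sum_mul]
    _ ≤ ∑ j, c * |x j| :=
        Finset.sum_le_sum fun j _ => mul_le_mul_of_nonneg_right (hD j) (abs_nonneg _)
    _ = c * ∑ j, |x j| := (Finset.mul_sum ..).symm

theorem sum_abs_smul_add_smul_le {a b : ℝ} (ha : 0 ≤ a) (hb : 0 ≤ b) (u v : m → ℝ) :
    ∑ i, |(a • u + b • v) i| ≤ a * ∑ i, |u i| + b * ∑ i, |v i| :=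
  calc ∑ i, |(a • u + b • v) i| ≤ ∑ i, (a * |u i| + b * |v i|) :=
        Finset.sum_le_sum fun i _ => (abs_add_le _ _).trans_eq <| by
          simp only [Pi.smul_apply, smul_eq_mul, abs_mul, abs_of_nonneg ha, abs_of_nonneg hb]
    _ = a * ∑ i, |u i| + b * ∑ i, |v i| := by
        rw [Finset.sum_add_distrib, Finset.mul_sum, Finset.mul_sum]

end L1Norm

section ColStochastic

variable {S : Type*} [Fintype S] [DecidableEq S] {K : Matrix S S ℝ}

theorem sum_abs_mulVec_le_of_mem_colStochastic (hK : K ∈ colStochastic ℝ S) (x : S → ℝ) :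
    ∑ i, |(K *ᵥ x) i| ≤ ∑ i, |x i| := by
  simpa using sum_abs_mulVec_le_s5 (c := 1) (fun j => by
    simp only [abs_of_nonneg (nonneg_of_mem_colStochastic hK), sum_col_of_mem_colStochastic hK,
      le_refl]) x

theorem summable_geometric_smul_pow_mulVec (hK : K ∈ colStochastic ℝ S) {γ : ℝ}
    (hγ0 : 0 ≤ γ) (hγ1 : γ < 1) (x : S → ℝ) :
    Summable fun t : ℕ => γ ^ t • (K ^ t *ᵥ x) := by
  refine .of_norm_bounded ((summable_geometric_of_lt_one hγ0 hγ1).mul_right (∑ i, |x i|))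
    fun t => ?_
  rw [norm_smul, norm_pow, Real.norm_of_nonneg hγ0]
  refine mul_le_mul_of_nonneg_left ?_ (pow_nonneg hγ0 t)
  refine (pi_norm_le_iff_of_nonneg (by positivity)).2 fun i => ?_
  rw [Real.norm_eq_abs]
  exact (Finset.single_le_sum (fun j _ => abs_nonneg ((K ^ t *ᵥ x) j)) (Finset.mem_univ i)).trans
    (sum_abs_mulVec_le_of_mem_colStochastic (pow_mem hK t) x)

theorem tsum_geometric_smul_pow_mulVec {γ : ℝ} {x : S → ℝ}
    (h : Summable fun t : ℕ => γ ^ t • (K ^ t *ᵥ x)) :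
    ∑' t : ℕ, γ ^ t • (K ^ t *ᵥ x) = x + γ • (K *ᵥ ∑' t : ℕ, γ ^ t • (K ^ t *ᵥ x)) := by
  have hshift : γ • (K *ᵥ ∑' t : ℕ, γ ^ t • (K ^ t *ᵥ x))
      = ∑' t : ℕ, γ ^ (t + 1) • (K ^ (t + 1) *ᵥ x) := by
    rw [← smul_mulVec, ← mulVecLin_apply,
      h.map_tsum _ (LinearMap.continuous_of_finiteDimensional _)]
    simp only [mulVecLin_apply, mulVec_smul, mulVec_mulVec, smul_mul_assoc, smul_mulVec, smul_smul,
      pow_succ', mul_comm γ]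
  rw [hshift, h.tsum_eq_zero_add, pow_zero, pow_zero, one_smul, one_mulVec]

end ColStochastic

section FixedPoint

variable {S : Type*} [Fintype S] [DecidableEq S] {M N : Matrix S S ℝ} {γ : ℝ}
  {x d e : S → ℝ}

theorem sum_abs_le_of_eq_smul_add_smul_mulVec (hN : N ∈ colStochastic ℝ S) (hγ0 : 0 ≤ γ)
    (hγ1 : γ < 1) (he : e = (1 - γ) • x + γ • (N *ᵥ e)) :
    ∑ i, |e i| ≤ ∑ i, |x i| := by
  have h : ∑ i, |e i| ≤ (1 - γ) * ∑ i, |x i| + γ * ∑ i, |e i| :=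
    calc ∑ i, |e i| ≤ (1 - γ) * ∑ i, |x i| + γ * ∑ i, |(N *ᵥ e) i| := by
          conv_lhs => rw [he]
          exact sum_abs_smul_add_smul_le (by linarith) hγ0 _ _
      _ ≤ (1 - γ) * ∑ i, |x i| + γ * ∑ i, |e i| := by
          gcongr _ + γ * ?_
          exact sum_abs_mulVec_le_of_mem_colStochastic hN e
  exact le_of_mul_le_mul_left (by linarith) (sub_pos.2 hγ1)

theorem sum_abs_sub_le_of_eq_smul_add_smul_mulVec (hM : M ∈ colStochastic ℝ S)
    {c : ℝ} (hMN : ∀ j, ∑ i, |(M - N) i j| ≤ c) (hγ0 : 0 ≤ γ)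
    (hd : d = (1 - γ) • x + γ • (M *ᵥ d)) (he : e = (1 - γ) • x + γ • (N *ᵥ e)) :
    (1 - γ) * ∑ i, |d i - e i| ≤ γ * c * ∑ i, |e i| := by
  have hsub : d - e = γ • (M *ᵥ (d - e)) + γ • ((M - N) *ᵥ e) := by
    conv_lhs => rw [hd, he]
    simp only [mulVec_sub, sub_mulVec, smul_sub]
    abel
  have h : ∑ i, |(d - e) i| ≤ γ * ∑ i, |(d - e) i| + γ * (c * ∑ i, |e i|) :=
    calc ∑ i, |(d - e) i|
        ≤ γ * ∑ i, |(M *ᵥ (d - e)) i| + γ * ∑ i, |((M - N) *ᵥ e) i| := by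
          conv_lhs => rw [hsub]
          exact sum_abs_smul_add_smul_le hγ0 hγ0 _ _
      _ ≤ γ * ∑ i, |(d - e) i| + γ * (c * ∑ i, |e i|) := by
          gcongr γ * ?_ + γ * ?_
          · exact sum_abs_mulVec_le_of_mem_colStochastic hM _
          · exact sum_abs_mulVec_le_s5 hMN e
  simp only [Pi.sub_apply] at h
  linarith

end FixedPoint

section MarkovGame

variable {S Av Aa : Type*} [Fintype Av] [Fintype Aa] {P : S → Av → Aa → S → ℝ}
  {pinu : S → Av → ℝ}

theorem inducedMatrix_sub_right (p q : S → Aa → ℝ) :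
    inducedMatrix P pinu p - inducedMatrix P pinu q = inducedMatrix P pinu (p - q) := by
  ext s' s
  simp only [inducedMatrix, Matrix.sub_apply, of_apply, Pi.sub_apply, ← Finset.sum_sub_distrib]
  exact Finset.sum_congr rfl fun _ _ => Finset.sum_congr rfl fun _ _ => by ring

theorem sum_inducedMatrix_apply [Fintype S] (hP1 : ∀ s av aa, ∑ s', P s av aa s' = 1)
    (hpinu1 : ∀ s, ∑ a, pinu s a = 1) (q : S → Aa → ℝ) (s : S) :
    ∑ s', inducedMatrix P pinu q s' s = ∑ a, q s a := by
  calc ∑ s', inducedMatrix P pinu q s' s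
      = ∑ av, ∑ aa, pinu s av * q s aa * ∑ s', P s av aa s' := by
        simp only [inducedMatrix, of_apply, Finset.mul_sum]
        rw [Finset.sum_comm]
        exact Finset.sum_congr rfl fun av _ => Finset.sum_comm
    _ = ∑ a, q s a := by
        simp only [hP1, mul_one, ← Finset.mul_sum, ← Finset.sum_mul, hpinu1, one_mul]

theorem abs_inducedMatrix_apply_le (hP0 : ∀ s av aa s', 0 ≤ P s av aa s')
    (hpinu0 : ∀ s a, 0 ≤ pinu s a) (q : S → Aa → ℝ) (s' s : S) :
    |inducedMatrix P pinu q s' s| ≤ inducedMatrix P pinu (fun s a => |q s a|) s' s := by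
  simp only [inducedMatrix, of_apply]
  refine (Finset.abs_sum_le_sum_abs _ _).trans (Finset.sum_le_sum fun av _ => ?_)
  refine (Finset.abs_sum_le_sum_abs _ _).trans_eq (Finset.sum_congr rfl fun aa _ => ?_)
  rw [abs_mul, abs_mul, abs_of_nonneg (hpinu0 s av), abs_of_nonneg (hP0 s av aa s')]

variable [Fintype S] [DecidableEq S] {q : S → Aa → ℝ}

theorem inducedMatrix_mem_colStochastic (hP0 : ∀ s av aa s', 0 ≤ P s av aa s')
    (hP1 : ∀ s av aa, ∑ s', P s av aa s' = 1) (hpinu0 : ∀ s a, 0 ≤ pinu s a)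
    (hpinu1 : ∀ s, ∑ a, pinu s a = 1) (hq0 : ∀ s a, 0 ≤ q s a) (hq1 : ∀ s, ∑ a, q s a = 1) :
    inducedMatrix P pinu q ∈ colStochastic ℝ S :=
  mem_colStochastic_iff_sum.2
    ⟨fun s' s => Finset.sum_nonneg fun av _ => Finset.sum_nonneg fun aa _ =>
      mul_nonneg (mul_nonneg (hpinu0 s av) (hq0 s aa)) (hP0 s av aa s'),
    fun s => (sum_inducedMatrix_apply hP1 hpinu1 q s).trans (hq1 s)⟩

theorem stateVisitation_eq_smul_add_smul_mulVec (hK : inducedMatrix P pinu q ∈ colStochastic ℝ S)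
    {γ : ℝ} (hγ0 : 0 ≤ γ) (hγ1 : γ < 1) (ρ : S → ℝ) :
    stateVisitation P γ ρ pinu q
      = (1 - γ) • ρ + γ • (inducedMatrix P pinu q *ᵥ stateVisitation P γ ρ pinu q) := by
  unfold stateVisitation
  conv_lhs =>
    rw [tsum_geometric_smul_pow_mulVec (summable_geometric_smul_pow_mulVec hK hγ0 hγ1 ρ)]
  rw [smul_add, mulVec_smul, smul_comm γ (1 - γ)]

end MarkovGame

theorem state_distribution_discrepancy_general {S Av Aa : Type*}
    [Fintype S] [DecidableEq S]
    [Fintype Av] [Fintype Aa]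
    (P : S → Av → Aa → S → ℝ)
    (hP0 : ∀ s av aa s', 0 ≤ P s av aa s')
    (hP1 : ∀ s av aa, ∑ s', P s av aa s' = 1)
    (γ : ℝ) (hγ0 : 0 ≤ γ) (hγ1 : γ < 1)
    (ρ : S → ℝ) (hρ0 : ∀ s, 0 ≤ ρ s) (hρ1 : ∑ s, ρ s = 1)
    (ε : ℝ) (hε0 : 0 ≤ ε)
    (pinuhat : S → Av → ℝ)
    (hpinuhat0 : ∀ s a, 0 ≤ pinuhat s a) (hpinuhat1 : ∀ s, ∑ a, pinuhat s a = 1)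
    (pialpha pialphahat : S → Aa → ℝ)
    (hpialpha0 : ∀ s a, 0 ≤ pialpha s a) (hpialpha1 : ∀ s, ∑ a, pialpha s a = 1)
    (hpialphahat0 : ∀ s a, 0 ≤ pialphahat s a)
    (hpialphahat1 : ∀ s, ∑ a, pialphahat s a = 1)
    (hTVmax : ∀ s, (1 / 2) * ∑ a, |pialpha s a - pialphahat s a| ≤ ε) :
    ∑ s, |stateVisitation P γ ρ pinuhat pialphahat s -
        stateVisitation P γ ρ pinuhat pialpha s| ≤ 2 * γ * ε / (1 - γ) := by
  have hM := inducedMatrix_mem_colStochastic hP0 hP1 hpinuhat0 hpinuhat1 hpialphahat0 hpialphahat1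
  have hN := inducedMatrix_mem_colStochastic hP0 hP1 hpinuhat0 hpinuhat1 hpialpha0 hpialpha1
  have hMN (s : S) : ∑ s', |(inducedMatrix P pinuhat pialphahat
      - inducedMatrix P pinuhat pialpha) s' s| ≤ 2 * ε :=
    calc _ ≤ ∑ s', inducedMatrix P pinuhat (fun s a => |(pialphahat - pialpha) s a|) s' s := by
          rw [inducedMatrix_sub_right]
          exact Finset.sum_le_sum fun s' _ => abs_inducedMatrix_apply_le hP0 hpinuhat0 _ s' s
      _ = ∑ a, |pialpha s a - pialphahat s a| := by
          simp only [sum_inducedMatrix_apply hP1 hpinuhat1, Pi.sub_apply, abs_sub_comm]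
      _ ≤ 2 * ε := by linarith [hTVmax s]
  have hρ : ∑ s, |ρ s| = 1 := by simp only [abs_of_nonneg (hρ0 _), hρ1]
  have he := stateVisitation_eq_smul_add_smul_mulVec hN hγ0 hγ1 ρ
  have hdiff := sum_abs_sub_le_of_eq_smul_add_smul_mulVec hM hMN hγ0
    (stateVisitation_eq_smul_add_smul_mulVec hM hγ0 hγ1 ρ) he
  have hmass := sum_abs_le_of_eq_smul_add_smul_mulVec hN hγ0 hγ1 he
  rw [le_div_iff₀ (sub_pos.2 hγ1), mul_comm]
  calc _ ≤ γ * (2 * ε) * ∑ s, |stateVisitation P γ ρ pinuhat pialpha s| := hdiff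
    _ ≤ γ * (2 * ε) * 1 := by rw [← hρ]; gcongr
    _ = 2 * γ * ε := by ring

/-- Proposition 2: if `D_TV^max(π_α, π̂_α) ≤ ε_π`, then
`‖d_ρ^{π̂_ν,π̂_α} - d_ρ^{π̂_ν,π_α}‖₁ ≤ 2γε_π/(1-γ)`. -/
theorem state_distribution_discrepancy {S Av Aa : Type*}
    [Fintype S] [Nonempty S] [DecidableEq S]
    [Fintype Av] [Nonempty Av] [Fintype Aa] [Nonempty Aa]
    (P : S → Av → Aa → S → ℝ)
    (hP0 : ∀ s av aa s', 0 ≤ P s av aa s')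
    (hP1 : ∀ s av aa, ∑ s', P s av aa s' = 1)
    (γ : ℝ) (hγ0 : 0 ≤ γ) (hγ1 : γ < 1)
    (ρ : S → ℝ) (hρ0 : ∀ s, 0 ≤ ρ s) (hρ1 : ∑ s, ρ s = 1)
    (ε : ℝ) (hε0 : 0 ≤ ε) (hε1 : ε ≤ 1)
    (pinuhat : S → Av → ℝ)
    (hpinuhat0 : ∀ s a, 0 ≤ pinuhat s a) (hpinuhat1 : ∀ s, ∑ a, pinuhat s a = 1)
    (pialpha pialphahat : S → Aa → ℝ)
    (hpialpha0 : ∀ s a, 0 ≤ pialpha s a) (hpialpha1 : ∀ s, ∑ a, pialpha s a = 1)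
    (hpialphahat0 : ∀ s a, 0 ≤ pialphahat s a)
    (hpialphahat1 : ∀ s, ∑ a, pialphahat s a = 1)
    (hTVmax : ∀ s, (1 / 2) * ∑ a, |pialpha s a - pialphahat s a| ≤ ε) :
    ∑ s, |stateVisitation P γ ρ pinuhat pialphahat s -
        stateVisitation P γ ρ pinuhat pialpha s| ≤ 2 * γ * ε / (1 - γ) :=
  state_distribution_discrepancy_general P hP0 hP1 γ hγ0 hγ1 ρ hρ0 hρ1 ε hε0 pinuhat hpinuhat0
    hpinuhat1 pialpha pialphahat hpialpha0 hpialpha1 hpialphahat0 hpialphahat1 hTVmax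
end

section
/- (Proposition 1: bounded policy discrepancy induces bounded value discrepancy.) In a finite two-player Markov game with discount factor γ ∈ [0,1), initial distribution ρ, and reward r : S × A_ν × A_α → [0,1], fix ε_π ∈ [0,1] and a victim policy π̂_ν, and let π_α, π̂_α be two attacker policies with D_TV^max(π_α, π̂_α) ≤ ε_π. Then |V_ρ(π̂_ν, π̂_α) - V_ρ(π̂_ν, π_α)| ≤ 2ε_π / (1-γ)². -/
open scoped BigOperators
open Matrix

/-- The marginalized reward `r̄_{π_ν,π_α}(s)`. -/
noncomputable def marginalReward {S Av Aa : Type*} [Fintype Av] [Fintype Aa]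
    (r : S → Av → Aa → ℝ) (pinu : S → Av → ℝ) (pialpha : S → Aa → ℝ) (s : S) : ℝ :=
  ∑ av, ∑ aa, pinu s av * pialpha s aa * r s av aa

/-- The value `V_ρ(π_ν, π_α) = ∑_t γ^t ⟨P^t ρ, r̄⟩`. -/
noncomputable def valueV {S Av Aa : Type*} [Fintype S] [DecidableEq S]
    [Fintype Av] [Fintype Aa]
    (P : S → Av → Aa → S → ℝ) (r : S → Av → Aa → ℝ) (γ : ℝ) (ρ : S → ℝ)
    (pinu : S → Av → ℝ) (pialpha : S → Aa → ℝ) : ℝ :=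
  ∑' t : ℕ, γ ^ t * ∑ s, ((inducedMatrix P pinu pialpha ^ t) *ᵥ ρ) s *
    marginalReward r pinu pialpha s

section Aux

variable {S Av Aa : Type*} [Fintype S] [Fintype Av] [Fintype Aa]

lemma inducedMatrix_nonneg (P : S → Av → Aa → S → ℝ)
    (hP0 : ∀ s av aa s', 0 ≤ P s av aa s')
    (pinu : S → Av → ℝ) (pialpha : S → Aa → ℝ)
    (h1 : ∀ s a, 0 ≤ pinu s a) (h2 : ∀ s a, 0 ≤ pialpha s a) (s' s : S) :
    0 ≤ inducedMatrix P pinu pialpha s' s := by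
  unfold inducedMatrix
  simp only [Matrix.of_apply]
  refine Finset.sum_nonneg fun av _ => Finset.sum_nonneg fun aa _ => ?_
  exact mul_nonneg (mul_nonneg (h1 s av) (h2 s aa)) (hP0 s av aa s')

lemma inducedMatrix_col_sum (P : S → Av → Aa → S → ℝ)
    (hP1 : ∀ s av aa, ∑ s', P s av aa s' = 1)
    (pinu : S → Av → ℝ) (pialpha : S → Aa → ℝ)
    (h1 : ∀ s, ∑ a, pinu s a = 1) (h2 : ∀ s, ∑ a, pialpha s a = 1) (s : S) :
    ∑ s', inducedMatrix P pinu pialpha s' s = 1 := by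
  unfold inducedMatrix
  simp only [Matrix.of_apply]
  rw [Finset.sum_comm]
  have : ∀ av ∈ Finset.univ, (∑ s', ∑ aa, pinu s av * pialpha s aa * P s av aa s')
      = pinu s av := by
    intro av _
    rw [Finset.sum_comm]
    have : ∀ aa ∈ Finset.univ, (∑ s', pinu s av * pialpha s aa * P s av aa s')
        = pinu s av * pialpha s aa := by
      intro aa _
      rw [← Finset.mul_sum, hP1 s av aa, mul_one]
    rw [Finset.sum_congr rfl this, ← Finset.mul_sum, h2 s, mul_one]
  rw [Finset.sum_congr rfl this, h1 s]

/-- mulVec preserves total mass for column-stochastic matrices. -/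
lemma stoch_mulVec_sum (M : Matrix S S ℝ) (hM : ∀ s, ∑ s', M s' s = 1) (x : S → ℝ) :
    ∑ s', (M *ᵥ x) s' = ∑ s, x s := by
  simp only [Matrix.mulVec, dotProduct]
  rw [Finset.sum_comm]
  refine Finset.sum_congr rfl fun s _ => ?_
  rw [← Finset.sum_mul, hM s, one_mul]

lemma stoch_mulVec_nonneg (M : Matrix S S ℝ) (hM0 : ∀ s' s, 0 ≤ M s' s)
    (x : S → ℝ) (hx : ∀ s, 0 ≤ x s) (s' : S) : 0 ≤ (M *ᵥ x) s' := by
  simp only [Matrix.mulVec, dotProduct]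
  exact Finset.sum_nonneg fun s _ => mul_nonneg (hM0 s' s) (hx s)

/-- ℓ¹-contraction for column-stochastic matrices. -/
lemma stoch_mulVec_abs_le (M : Matrix S S ℝ) (hM0 : ∀ s' s, 0 ≤ M s' s)
    (hM : ∀ s, ∑ s', M s' s = 1) (x : S → ℝ) :
    ∑ s', |(M *ᵥ x) s'| ≤ ∑ s, |x s| := by
  have h1 : ∀ s', |(M *ᵥ x) s'| ≤ ∑ s, M s' s * |x s| := by
    intro s'
    simp only [Matrix.mulVec, dotProduct]
    refine (Finset.abs_sum_le_sum_abs _ _).trans ?_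
    refine Finset.sum_le_sum fun s _ => ?_
    rw [abs_mul, abs_of_nonneg (hM0 s' s)]
  calc ∑ s', |(M *ᵥ x) s'| ≤ ∑ s', ∑ s, M s' s * |x s| :=
        Finset.sum_le_sum fun s' _ => h1 s'
    _ = ∑ s, |x s| := by
        rw [Finset.sum_comm]
        refine Finset.sum_congr rfl fun s _ => ?_
        rw [← Finset.sum_mul, hM s, one_mul]

/-- ℓ¹ bound for a difference of matrices applied to a nonneg vector of mass 1. -/
lemma diff_mulVec_abs_le (M N : Matrix S S ℝ) (c : ℝ)
    (hΔ : ∀ s, ∑ s', |M s' s - N s' s| ≤ c)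
    (x : S → ℝ) (hx0 : ∀ s, 0 ≤ x s) (hx1 : ∑ s, x s = 1) :
    ∑ s', |(M *ᵥ x) s' - (N *ᵥ x) s'| ≤ c := by
  have h1 : ∀ s', |(M *ᵥ x) s' - (N *ᵥ x) s'| ≤ ∑ s, |M s' s - N s' s| * x s := by
    intro s'
    simp only [Matrix.mulVec, dotProduct]
    rw [← Finset.sum_sub_distrib]
    refine (Finset.abs_sum_le_sum_abs _ _).trans ?_
    refine Finset.sum_le_sum fun s _ => ?_
    rw [← sub_mul, abs_mul, abs_of_nonneg (hx0 s)]
  calc ∑ s', |(M *ᵥ x) s' - (N *ᵥ x) s'| ≤ ∑ s', ∑ s, |M s' s - N s' s| * x s :=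
        Finset.sum_le_sum fun s' _ => h1 s'
    _ = ∑ s, (∑ s', |M s' s - N s' s|) * x s := by
        rw [Finset.sum_comm]
        exact Finset.sum_congr rfl fun s _ => (Finset.sum_mul ..).symm
    _ ≤ ∑ s, c * x s :=
        Finset.sum_le_sum fun s _ => mul_le_mul_of_nonneg_right (hΔ s) (hx0 s)
    _ = c := by rw [← Finset.mul_sum, hx1, mul_one]

end Aux

private lemma abs_tsum_le' (f : ℕ → ℝ) (h : Summable fun n => |f n|) :
    |∑' n, f n| ≤ ∑' n, |f n| := by
  simpa [Real.norm_eq_abs] using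
    norm_tsum_le_tsum_norm (f := f) (by simpa [Real.norm_eq_abs] using h)

/-- Proposition 1: if `D_TV^max(π_α, π̂_α) ≤ ε_π`, then
`|V_ρ(π̂_ν, π̂_α) - V_ρ(π̂_ν, π_α)| ≤ 2ε_π/(1-γ)²`. -/
theorem value_discrepancy {S Av Aa : Type*}
    [Fintype S] [Nonempty S] [DecidableEq S]
    [Fintype Av] [Nonempty Av] [Fintype Aa] [Nonempty Aa]
    (P : S → Av → Aa → S → ℝ)
    (hP0 : ∀ s av aa s', 0 ≤ P s av aa s')
    (hP1 : ∀ s av aa, ∑ s', P s av aa s' = 1)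
    (r : S → Av → Aa → ℝ)
    (hr0 : ∀ s av aa, 0 ≤ r s av aa) (hr1 : ∀ s av aa, r s av aa ≤ 1)
    (γ : ℝ) (hγ0 : 0 ≤ γ) (hγ1 : γ < 1)
    (ρ : S → ℝ) (hρ0 : ∀ s, 0 ≤ ρ s) (hρ1 : ∑ s, ρ s = 1)
    (ε : ℝ) (hε0 : 0 ≤ ε) (hε1 : ε ≤ 1)
    (pinuhat : S → Av → ℝ)
    (hpinuhat0 : ∀ s a, 0 ≤ pinuhat s a) (hpinuhat1 : ∀ s, ∑ a, pinuhat s a = 1)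
    (pialpha pialphahat : S → Aa → ℝ)
    (hpialpha0 : ∀ s a, 0 ≤ pialpha s a) (hpialpha1 : ∀ s, ∑ a, pialpha s a = 1)
    (hpialphahat0 : ∀ s a, 0 ≤ pialphahat s a)
    (hpialphahat1 : ∀ s, ∑ a, pialphahat s a = 1)
    (hTVmax : ∀ s, (1 / 2) * ∑ a, |pialpha s a - pialphahat s a| ≤ ε) :
    |valueV P r γ ρ pinuhat pialphahat - valueV P r γ ρ pinuhat pialpha| ≤
      2 * ε / (1 - γ) ^ 2 := by
  set M : Matrix S S ℝ := inducedMatrix P pinuhat pialpha with hM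
  set N : Matrix S S ℝ := inducedMatrix P pinuhat pialphahat with hN
  have hTV : ∀ s, ∑ a, |pialpha s a - pialphahat s a| ≤ 2 * ε := by
    intro s; linarith [hTVmax s]
  -- nonnegativity and stochasticity of M and N
  have hM0 : ∀ s' s, 0 ≤ M s' s :=
    inducedMatrix_nonneg P hP0 pinuhat pialpha hpinuhat0 hpialpha0
  have hN0 : ∀ s' s, 0 ≤ N s' s :=
    inducedMatrix_nonneg P hP0 pinuhat pialphahat hpinuhat0 hpialphahat0
  have hM1 : ∀ s, ∑ s', M s' s = 1 :=
    inducedMatrix_col_sum P hP1 pinuhat pialpha hpinuhat1 hpialpha1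
  have hN1 : ∀ s, ∑ s', N s' s = 1 :=
    inducedMatrix_col_sum P hP1 pinuhat pialphahat hpinuhat1 hpialphahat1
  -- column TV bound between N and M
  have hcol : ∀ s, ∑ s', |N s' s - M s' s| ≤ 2 * ε := by
    intro s
    have h1 : ∀ s', |N s' s - M s' s|
        ≤ ∑ av, ∑ aa, pinuhat s av * |pialpha s aa - pialphahat s aa| * P s av aa s' := by
      intro s'
      show |inducedMatrix P pinuhat pialphahat s' s - inducedMatrix P pinuhat pialpha s' s| ≤ _
      unfold inducedMatrix
      simp only [Matrix.of_apply]
      rw [← Finset.sum_sub_distrib]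
      refine (Finset.abs_sum_le_sum_abs _ _).trans (Finset.sum_le_sum fun av _ => ?_)
      rw [← Finset.sum_sub_distrib]
      refine (Finset.abs_sum_le_sum_abs _ _).trans (Finset.sum_le_sum fun aa _ => ?_)
      have : pinuhat s av * pialphahat s aa * P s av aa s'
          - pinuhat s av * pialpha s aa * P s av aa s'
          = pinuhat s av * (pialphahat s aa - pialpha s aa) * P s av aa s' := by ring
      rw [this, abs_mul, abs_mul, abs_of_nonneg (hpinuhat0 s av),
        abs_of_nonneg (hP0 s av aa s'), abs_sub_comm]
    calc ∑ s', |N s' s - M s' s|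
        ≤ ∑ s', ∑ av, ∑ aa, pinuhat s av * |pialpha s aa - pialphahat s aa| * P s av aa s' :=
          Finset.sum_le_sum fun s' _ => h1 s'
      _ = ∑ av, ∑ aa, pinuhat s av * |pialpha s aa - pialphahat s aa|
            * ∑ s', P s av aa s' := by
          rw [Finset.sum_comm]
          refine Finset.sum_congr rfl fun av _ => ?_
          rw [Finset.sum_comm]
          exact Finset.sum_congr rfl fun aa _ => (Finset.mul_sum ..).symm
      _ = ∑ av, pinuhat s av * ∑ aa, |pialpha s aa - pialphahat s aa| := by
          refine Finset.sum_congr rfl fun av _ => ?_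
          rw [Finset.mul_sum]
          exact Finset.sum_congr rfl fun aa _ => by rw [hP1 s av aa, mul_one]
      _ ≤ ∑ av, pinuhat s av * (2 * ε) :=
          Finset.sum_le_sum fun av _ =>
            mul_le_mul_of_nonneg_left (hTV s) (hpinuhat0 s av)
      _ = 2 * ε := by rw [← Finset.sum_mul, hpinuhat1 s, one_mul]
  -- iterates
  set ρM : ℕ → S → ℝ := fun t => (M ^ t) *ᵥ ρ with hρM
  set ρN : ℕ → S → ℝ := fun t => (N ^ t) *ᵥ ρ with hρN
  have hstep : ∀ (Q : Matrix S S ℝ) (t : ℕ), (Q ^ (t+1)) *ᵥ ρ = Q *ᵥ ((Q ^ t) *ᵥ ρ) := by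
    intro Q t
    rw [Matrix.mulVec_mulVec, ← pow_succ']
  -- each ρM t, ρN t is a probability vector
  have hprob : ∀ (Q : Matrix S S ℝ), (∀ s' s, 0 ≤ Q s' s) → (∀ s, ∑ s', Q s' s = 1) →
      ∀ t, (∀ s, 0 ≤ ((Q ^ t) *ᵥ ρ) s) ∧ (∑ s, ((Q ^ t) *ᵥ ρ) s = 1) := by
    intro Q hQ0 hQ1 t
    induction t with
    | zero => simpa [pow_zero, Matrix.one_mulVec] using ⟨hρ0, hρ1⟩
    | succ t ih =>
      rw [hstep Q t]
      exact ⟨stoch_mulVec_nonneg Q hQ0 _ ih.1,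
        by rw [stoch_mulVec_sum Q hQ1]; exact ih.2⟩
  have hρM0 : ∀ t s, 0 ≤ ρM t s := fun t => (hprob M hM0 hM1 t).1
  have hρM1 : ∀ t, ∑ s, ρM t s = 1 := fun t => (hprob M hM0 hM1 t).2
  have hρN0 : ∀ t s, 0 ≤ ρN t s := fun t => (hprob N hN0 hN1 t).1
  have hρN1 : ∀ t, ∑ s, ρN t s = 1 := fun t => (hprob N hN0 hN1 t).2
  -- ℓ¹ bound on iterates: ∑ |ρN t - ρM t| ≤ 2 ε t
  have hl1 : ∀ t, ∑ s, |ρN t s - ρM t s| ≤ 2 * ε * t := by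
    intro t
    induction t with
    | zero => simp [hρN, hρM, Matrix.one_mulVec]
    | succ t ih =>
      have expand : ∀ s, ρN (t+1) s - ρM (t+1) s
          = (N *ᵥ (fun u => ρN t u - ρM t u)) s + ((N *ᵥ ρM t) s - (M *ᵥ ρM t) s) := by
        intro s
        have h1 : ρN (t+1) = N *ᵥ ρN t := hstep N t
        have h2 : ρM (t+1) = M *ᵥ ρM t := hstep M t
        rw [h1, h2]
        simp only [Matrix.mulVec, dotProduct, mul_sub, Finset.sum_sub_distrib]
        ring
      calc ∑ s, |ρN (t+1) s - ρM (t+1) s|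
          ≤ ∑ s, (|(N *ᵥ (fun u => ρN t u - ρM t u)) s| + |(N *ᵥ ρM t) s - (M *ᵥ ρM t) s|) := by
            refine Finset.sum_le_sum fun s _ => ?_
            rw [expand s]; exact abs_add_le _ _
        _ = (∑ s, |(N *ᵥ (fun u => ρN t u - ρM t u)) s|)
            + ∑ s, |(N *ᵥ ρM t) s - (M *ᵥ ρM t) s| := Finset.sum_add_distrib
        _ ≤ (∑ s, |ρN t s - ρM t s|) + 2 * ε :=
            add_le_add (stoch_mulVec_abs_le N hN0 hN1 _)
              (diff_mulVec_abs_le N M (2*ε) hcol (ρM t) (hρM0 t) (hρM1 t))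
        _ ≤ 2 * ε * t + 2 * ε := by linarith
        _ = 2 * ε * (t+1 : ℕ) := by push_cast; ring
  -- reward bounds
  have hrM0 : ∀ s, 0 ≤ marginalReward r pinuhat pialpha s := by
    intro s
    refine Finset.sum_nonneg fun av _ => Finset.sum_nonneg fun aa _ =>
      mul_nonneg (mul_nonneg (hpinuhat0 s av) (hpialpha0 s aa)) (hr0 s av aa)
  have hrbd : ∀ (pia : S → Aa → ℝ), (∀ s a, 0 ≤ pia s a) → (∀ s, ∑ a, pia s a = 1) →
      ∀ s, 0 ≤ marginalReward r pinuhat pia s ∧ marginalReward r pinuhat pia s ≤ 1 := by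
    intro pia h0 h1 s
    constructor
    · exact Finset.sum_nonneg fun av _ => Finset.sum_nonneg fun aa _ =>
        mul_nonneg (mul_nonneg (hpinuhat0 s av) (h0 s aa)) (hr0 s av aa)
    · calc marginalReward r pinuhat pia s
          ≤ ∑ av, ∑ aa, pinuhat s av * pia s aa * 1 := by
            refine Finset.sum_le_sum fun av _ => Finset.sum_le_sum fun aa _ => ?_
            exact mul_le_mul_of_nonneg_left (hr1 s av aa)
              (mul_nonneg (hpinuhat0 s av) (h0 s aa))
        _ = 1 := by
            simp only [mul_one]
            rw [show (∑ av, ∑ aa, pinuhat s av * pia s aa)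
              = ∑ av, pinuhat s av * ∑ aa, pia s aa from
                Finset.sum_congr rfl fun av _ => (Finset.mul_sum ..).symm]
            simp only [h1, mul_one, hpinuhat1 s]
  have hrdiff : ∀ s, |marginalReward r pinuhat pialphahat s
      - marginalReward r pinuhat pialpha s| ≤ 2 * ε := by
    intro s
    unfold marginalReward
    rw [← Finset.sum_sub_distrib]
    refine (Finset.abs_sum_le_sum_abs _ _).trans ?_
    calc ∑ av, |∑ aa, pinuhat s av * pialphahat s aa * r s av aa
            - ∑ aa, pinuhat s av * pialpha s aa * r s av aa|
        ≤ ∑ av, ∑ aa, pinuhat s av * |pialpha s aa - pialphahat s aa| := by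
          refine Finset.sum_le_sum fun av _ => ?_
          rw [← Finset.sum_sub_distrib]
          refine (Finset.abs_sum_le_sum_abs _ _).trans (Finset.sum_le_sum fun aa _ => ?_)
          have : pinuhat s av * pialphahat s aa * r s av aa
              - pinuhat s av * pialpha s aa * r s av aa
              = pinuhat s av * (pialphahat s aa - pialpha s aa) * r s av aa := by ring
          rw [this, abs_mul, abs_mul, abs_of_nonneg (hpinuhat0 s av),
            abs_of_nonneg (hr0 s av aa), abs_sub_comm]
          calc pinuhat s av * |pialpha s aa - pialphahat s aa| * r s av aa
              ≤ pinuhat s av * |pialpha s aa - pialphahat s aa| * 1 := by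
                exact mul_le_mul_of_nonneg_left (hr1 s av aa)
                  (mul_nonneg (hpinuhat0 s av) (abs_nonneg _))
            _ = pinuhat s av * |pialpha s aa - pialphahat s aa| := mul_one _
      _ = ∑ av, pinuhat s av * ∑ aa, |pialpha s aa - pialphahat s aa| :=
          Finset.sum_congr rfl fun av _ => (Finset.mul_sum ..).symm
      _ ≤ ∑ av, pinuhat s av * (2 * ε) :=
          Finset.sum_le_sum fun av _ => mul_le_mul_of_nonneg_left (hTV s) (hpinuhat0 s av)
      _ = 2 * ε := by rw [← Finset.sum_mul, hpinuhat1 s, one_mul]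
  -- term sequences
  set a : ℕ → ℝ := fun t => γ ^ t * ∑ s, ρM t s * marginalReward r pinuhat pialpha s with ha
  set b : ℕ → ℝ := fun t => γ ^ t * ∑ s, ρN t s * marginalReward r pinuhat pialphahat s with hb
  have hVa : valueV P r γ ρ pinuhat pialpha = ∑' t, a t := rfl
  have hVb : valueV P r γ ρ pinuhat pialphahat = ∑' t, b t := rfl
  -- bounds on terms: 0 ≤ a t ≤ γ^t, same for b
  have htermbd : ∀ (pia : S → Aa → ℝ) (h0 : ∀ s a, 0 ≤ pia s a)
      (h1 : ∀ s, ∑ a, pia s a = 1) (x : S → ℝ) (hx0 : ∀ s, 0 ≤ x s) (hx1 : ∑ s, x s = 1),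
      0 ≤ ∑ s, x s * marginalReward r pinuhat pia s
        ∧ ∑ s, x s * marginalReward r pinuhat pia s ≤ 1 := by
    intro pia h0 h1 x hx0 hx1
    constructor
    · exact Finset.sum_nonneg fun s _ => mul_nonneg (hx0 s) (hrbd pia h0 h1 s).1
    · calc ∑ s, x s * marginalReward r pinuhat pia s ≤ ∑ s, x s * 1 :=
          Finset.sum_le_sum fun s _ =>
            mul_le_mul_of_nonneg_left (hrbd pia h0 h1 s).2 (hx0 s)
        _ = 1 := by simpa using hx1
  have ha0 : ∀ t, 0 ≤ a t := fun t => mul_nonneg (pow_nonneg hγ0 t)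
    (htermbd pialpha hpialpha0 hpialpha1 (ρM t) (hρM0 t) (hρM1 t)).1
  have ha1 : ∀ t, a t ≤ γ ^ t := fun t => by
    have := (htermbd pialpha hpialpha0 hpialpha1 (ρM t) (hρM0 t) (hρM1 t)).2
    calc a t ≤ γ ^ t * 1 := mul_le_mul_of_nonneg_left this (pow_nonneg hγ0 t)
      _ = γ ^ t := mul_one _
  have hb0 : ∀ t, 0 ≤ b t := fun t => mul_nonneg (pow_nonneg hγ0 t)
    (htermbd pialphahat hpialphahat0 hpialphahat1 (ρN t) (hρN0 t) (hρN1 t)).1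
  have hb1 : ∀ t, b t ≤ γ ^ t := fun t => by
    have := (htermbd pialphahat hpialphahat0 hpialphahat1 (ρN t) (hρN0 t) (hρN1 t)).2
    calc b t ≤ γ ^ t * 1 := mul_le_mul_of_nonneg_left this (pow_nonneg hγ0 t)
      _ = γ ^ t := mul_one _
  have hgeo : Summable fun t : ℕ => γ ^ t := summable_geometric_of_lt_one hγ0 hγ1
  have hsa : Summable a := hgeo.of_nonneg_of_le ha0 ha1
  have hsb : Summable b := hgeo.of_nonneg_of_le hb0 hb1
  -- per-term difference bound
  have hdiff : ∀ t, |b t - a t| ≤ γ ^ t * (2 * ε * t + 2 * ε) := by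
    intro t
    have key : b t - a t = γ ^ t * ((∑ s, (ρN t s - ρM t s) * marginalReward r pinuhat pialphahat s)
        + ∑ s, ρM t s * (marginalReward r pinuhat pialphahat s - marginalReward r pinuhat pialpha s)) := by
      simp only [ha, hb]
      rw [← mul_sub, ← Finset.sum_sub_distrib, ← Finset.sum_add_distrib]
      congr 1
      refine Finset.sum_congr rfl fun s _ => ?_
      ring
    rw [key, abs_mul, abs_pow, abs_of_nonneg hγ0]
    refine mul_le_mul_of_nonneg_left ?_ (pow_nonneg hγ0 t)
    refine (abs_add_le _ _).trans ?_
    have h1 : |∑ s, (ρN t s - ρM t s) * marginalReward r pinuhat pialphahat s| ≤ 2 * ε * t := by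
      refine (Finset.abs_sum_le_sum_abs _ _).trans ?_
      calc ∑ s, |(ρN t s - ρM t s) * marginalReward r pinuhat pialphahat s|
          ≤ ∑ s, |ρN t s - ρM t s| := by
            refine Finset.sum_le_sum fun s _ => ?_
            rw [abs_mul]
            have hm := hrbd pialphahat hpialphahat0 hpialphahat1 s
            calc |ρN t s - ρM t s| * |marginalReward r pinuhat pialphahat s|
                ≤ |ρN t s - ρM t s| * 1 := by
                  refine mul_le_mul_of_nonneg_left ?_ (abs_nonneg _)
                  rw [abs_of_nonneg hm.1]; exact hm.2
              _ = _ := mul_one _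
        _ ≤ 2 * ε * t := hl1 t
    have h2 : |∑ s, ρM t s * (marginalReward r pinuhat pialphahat s
        - marginalReward r pinuhat pialpha s)| ≤ 2 * ε := by
      refine (Finset.abs_sum_le_sum_abs _ _).trans ?_
      calc ∑ s, |ρM t s * (marginalReward r pinuhat pialphahat s - marginalReward r pinuhat pialpha s)|
          ≤ ∑ s, ρM t s * (2 * ε) := by
            refine Finset.sum_le_sum fun s _ => ?_
            rw [abs_mul, abs_of_nonneg (hρM0 t s)]
            exact mul_le_mul_of_nonneg_left (hrdiff s) (hρM0 t s)
        _ = 2 * ε := by rw [← Finset.sum_mul, hρM1 t, one_mul]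
    linarith
  -- summability of the bound
  have hγn : ‖γ‖ < 1 := by rwa [Real.norm_eq_abs, abs_of_nonneg hγ0]
  have hsum1 : Summable fun t : ℕ => (t : ℝ) * γ ^ t := by
    simpa using summable_pow_mul_geometric_of_norm_lt_one (R := ℝ) 1 hγn
  have hsbd : Summable fun t : ℕ => γ ^ t * (2 * ε * t + 2 * ε) := by
    have : (fun t : ℕ => γ ^ t * (2 * ε * t + 2 * ε))
        = fun t : ℕ => 2 * ε * ((t : ℝ) * γ ^ t) + 2 * ε * γ ^ t := by
      funext t; ring
    rw [this]
    exact ((hsum1.mul_left _).add (hgeo.mul_left _))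
  have habs : Summable fun t => |b t - a t| := by
    refine Summable.of_nonneg_of_le (fun t => abs_nonneg _) hdiff hsbd
  -- put it together
  rw [hVa, hVb, ← Summable.tsum_sub hsb hsa]
  refine (abs_tsum_le' _ habs).trans ?_
  refine (Summable.tsum_le_tsum hdiff habs hsbd).trans ?_
  have hval : ∑' t : ℕ, γ ^ t * (2 * ε * t + 2 * ε)
      = 2 * ε * (γ / (1-γ)^2) + 2 * ε * (1-γ)⁻¹ := by
    have e1 : ∑' t : ℕ, (t : ℝ) * γ ^ t = γ / (1-γ)^2 := by
      simpa using tsum_coe_mul_geometric_of_norm_lt_one (r := γ)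
        hγn
    have e2 : ∑' t : ℕ, γ ^ t = (1-γ)⁻¹ := tsum_geometric_of_lt_one hγ0 hγ1
    have : (fun t : ℕ => γ ^ t * (2 * ε * t + 2 * ε))
        = fun t : ℕ => 2 * ε * ((t : ℝ) * γ ^ t) + 2 * ε * γ ^ t := by
      funext t; ring
    rw [this, Summable.tsum_add (hsum1.mul_left _) (hgeo.mul_left _),
      tsum_mul_left, tsum_mul_left, e1, e2]
  rw [hval]
  have hγne : (1:ℝ) - γ ≠ 0 := by linarith
  have : 2 * ε * (γ / (1-γ)^2) + 2 * ε * (1-γ)⁻¹ = 2 * ε / (1-γ)^2 := by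
    field_simp
    ring
  exact le_of_eq this
end

section
/- (Proposition 3, general f-divergence form via the finite data processing inequality.) Let A and S be finite nonempty sets, let f : ℝ → ℝ be convex with f(1) = 0, let K assign to each a ∈ A a probability vector K(·|a) on S, and let p, q be probability vectors on A such that q(a) > 0 for all a ∈ A and (Kq)(s) := ∑_a K(s|a) q(a) > 0 for all s ∈ S. Define D_f(p‖q) = ∑_a q(a) f(p(a)/q(a)) and D_f(Kp‖Kq) = ∑_s (Kq)(s) f((Kp)(s)/(Kq)(s)), where (Kp)(s) = ∑_a K(s|a) p(a). Then D_f(Kp‖Kq) ≤ D_f(p‖q). -/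
open scoped BigOperators

/-- Proposition 3, general f-divergence form; finite data processing
inequality: pushing two probability vectors through a stochastic kernel does not
increase their f-divergence. -/
theorem f_divergence_data_processing {A S : Type*}
    [Fintype A] [Nonempty A] [Fintype S] [Nonempty S]
    (f : ℝ → ℝ) (hf : ConvexOn ℝ Set.univ f) (hf1 : f 1 = 0)
    (K : A → S → ℝ) (hK0 : ∀ a s, 0 ≤ K a s) (hK1 : ∀ a, ∑ s, K a s = 1)
    (p q : A → ℝ)
    (hp0 : ∀ a, 0 ≤ p a) (hp1 : ∑ a, p a = 1)
    (hq0 : ∀ a, 0 < q a) (hq1 : ∑ a, q a = 1)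
    (hKq : ∀ s, 0 < ∑ a, K a s * q a) :
    ∑ s, (∑ a, K a s * q a) * f ((∑ a, K a s * p a) / (∑ a, K a s * q a)) ≤
      ∑ a, q a * f (p a / q a) := by
  have key : ∀ s, (∑ a, K a s * q a) * f ((∑ a, K a s * p a) / (∑ a, K a s * q a)) ≤
      ∑ a, (K a s * q a) * f (p a / q a) := by
    intro s
    set Q := ∑ a, K a s * q a with hQ
    have hQpos := hKq s
    have hjensen := hf.map_sum_le (t := Finset.univ)
      (w := fun a => K a s * q a / Q) (p := fun a => p a / q a)
      (fun a _ => div_nonneg (mul_nonneg (hK0 a s) (hq0 a).le) (hKq s).le)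
      (by rw [← Finset.sum_div, div_self hQpos.ne'])
      (fun a _ => Set.mem_univ _)
    have harg : ∑ a, (K a s * q a / Q) • (p a / q a) = (∑ a, K a s * p a) / Q := by
      simp only [smul_eq_mul]
      rw [Finset.sum_div]
      apply Finset.sum_congr rfl
      intro a _
      have hQne : Q ≠ 0 := hQpos.ne'
      field_simp [hQne, (hq0 a).ne']
    rw [harg] at hjensen
    calc Q * f ((∑ a, K a s * p a) / Q)
        ≤ Q * ∑ a, (K a s * q a / Q) * f (p a / q a) := by
          exact mul_le_mul_of_nonneg_left hjensen hQpos.le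
      _ = ∑ a, (K a s * q a) * f (p a / q a) := by
          rw [Finset.mul_sum]
          apply Finset.sum_congr rfl
          intro a _
          have hQne : Q ≠ 0 := hQpos.ne'
          field_simp
  calc ∑ s, (∑ a, K a s * q a) * f ((∑ a, K a s * p a) / (∑ a, K a s * q a))
      ≤ ∑ s, ∑ a, (K a s * q a) * f (p a / q a) :=
        Finset.sum_le_sum fun s _ => key s
    _ = ∑ a, q a * f (p a / q a) := by
        rw [Finset.sum_comm]
        apply Finset.sum_congr rfl
        intro a _
        rw [← Finset.sum_mul, ← Finset.sum_mul, hK1, one_mul]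
end

section
/- (Lemma: Lipschitz gradient bound in the victim block.) In a finite two-player Markov game with discount factor γ ∈ [0,1), initial distribution ρ, reward r : S × A_ν × A_α → [0,1], benign attacker policy π̂_α and ε_π ∈ [0,1], the function J_{ε_π}(ν, α) is differentiable at every point (ν, α) of the product of simplices Δ(A_ν)^{|S|} × Δ(A_α)^{|S|}, and its gradient with respect to the ν-block satisfies ‖∇_ν J_{ε_π}(ν, α)‖ ≤ √|A_ν| / (1-γ)², where ‖·‖ is the Euclidean norm on ℝ^{S × A_ν}. -/
/-!
Under the direct parameterization the objective is the rational function
`⟨(1 - γ P)⁻¹ ρ, r̄⟩`, where `P` and `r̄` are bilinear in the two policies, so it is smooth in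
`(ν, α)` wherever `1 - γ P` is invertible. Differentiating through
`d(M⁻¹) = -M⁻¹ (dM) M⁻¹` in the victim block gives the policy-gradient formula
`∂J/∂ν(s, a) = d(s) Q(s, a)`, with `d = (1 - γ P)⁻¹ ρ` the discounted occupancy and `Q` the
action value averaged over the attacker.

At policies `P` is column-stochastic, so the Neumann series `(1 - γ P)⁻¹ = ∑ γᵏ Pᵏ` is
entrywise nonnegative with column sums `(1 - γ)⁻¹`. Hence `d ≥ 0`, `∑ d = (1 - γ)⁻¹` and
`0 ≤ Q ≤ (1 - γ)⁻¹`, and `‖∇_ν J‖² = ∑ d(s)² Q(s, a)² ≤ |A_ν| (1 - γ)⁻² (∑ d)²`.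
-/

open scoped BigOperators RealInnerProductSpace
open Matrix

/-- The objective `J_{ε_π}(ν, α) = V_ρ(π_ν, (1-ε_π)π̂_α + ε_π π_α)` under direct
parameterization, extended near the simplices by the rational formula
`J = ⟨(I - γ P_{π_ν, π_α^mix})⁻¹ ρ, r̄⟩` (the value scaled by `1/(1-γ)` is recovered
as `(1/(1-γ))⟨d, r̄⟩`; here `⟨(I-γP)⁻¹ρ, r̄⟩ = ∑_t γ^t ⟨P^t ρ, r̄⟩` is the value). -/
noncomputable def Jobj {S Av Aa : Type*} [Fintype S] [DecidableEq S]
    [Fintype Av] [Fintype Aa]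
    (P : S → Av → Aa → S → ℝ) (r : S → Av → Aa → ℝ) (γ ε : ℝ)
    (ρ : S → ℝ) (pihat : S → Aa → ℝ)
    (ν : EuclideanSpace ℝ (S × Av)) (α : EuclideanSpace ℝ (S × Aa)) : ℝ :=
  ∑ s, (((1 - γ • inducedMatrix P (fun s a => ν (s, a))
        (fun s a => (1 - ε) * pihat s a + ε * α (s, a)))⁻¹ *ᵥ ρ) s) *
      marginalReward r (fun s a => ν (s, a))
        (fun s a => (1 - ε) * pihat s a + ε * α (s, a)) s

/-- Membership in the product of probability simplices `Δ(A)^{|S|}`, under direct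
parameterization as a Euclidean vector. -/
def inPolicySimplex {S A : Type*} [Fintype A]
    (x : EuclideanSpace ℝ (S × A)) : Prop :=
  (∀ p : S × A, 0 ≤ x p) ∧ ∀ s : S, ∑ a, x (s, a) = 1

namespace Matrix

variable {n : Type*} [DecidableEq n] {γ : ℝ}

theorem transpose_one_sub_smul (B : Matrix n n ℝ) : (1 - γ • B)ᵀ = 1 - γ • Bᵀ := by
  rw [transpose_sub, transpose_one, transpose_smul]

section Resolvent

attribute [local instance] Matrix.linftyOpNormedRing Matrix.linftyOpNormedAlgebra

variable [Fintype n] {A B : Matrix n n ℝ}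

theorem norm_le_one_of_mem_rowStochastic (hA : A ∈ rowStochastic ℝ n) : ‖A‖ ≤ 1 := by
  rw [linfty_opNorm_def, NNReal.coe_le_one, Finset.sup_le_iff]
  intro i _
  rw [← NNReal.coe_le_one, NNReal.coe_sum]
  simp only [coe_nnnorm, Real.norm_of_nonneg (nonneg_of_mem_rowStochastic hA),
    sum_row_of_mem_rowStochastic hA i, le_refl]

theorem norm_smul_lt_one_of_mem_rowStochastic (hA : A ∈ rowStochastic ℝ n)
    (hγ0 : 0 ≤ γ) (hγ1 : γ < 1) : ‖γ • A‖ < 1 :=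
  calc ‖γ • A‖ ≤ γ * ‖A‖ := by rw [norm_smul, Real.norm_of_nonneg hγ0]
    _ ≤ γ * 1 := by gcongr; exact norm_le_one_of_mem_rowStochastic hA
    _ < 1 := by linarith

theorem isUnit_one_sub_smul_of_mem_rowStochastic (hA : A ∈ rowStochastic ℝ n)
    (hγ0 : 0 ≤ γ) (hγ1 : γ < 1) : IsUnit (1 - γ • A) :=
  isUnit_one_sub_of_norm_lt_one (norm_smul_lt_one_of_mem_rowStochastic hA hγ0 hγ1)

theorem inv_one_sub_smul_nonneg_of_mem_rowStochastic (hA : A ∈ rowStochastic ℝ n)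
    (hγ0 : 0 ≤ γ) (hγ1 : γ < 1) (i j : n) : 0 ≤ (1 - γ • A)⁻¹ i j := by
  have hsum := (hasSum_geom_series_inverse _
    (norm_smul_lt_one_of_mem_rowStochastic hA hγ0 hγ1)).mapL
      (entryLinearMap ℝ ℝ i j).toContinuousLinearMap
  rw [nonsing_inv_eq_ringInverse]
  refine hsum.nonneg fun k => ?_
  simp only [LinearMap.coe_toContinuousLinearMap', entryLinearMap_apply, smul_pow, smul_apply,
    smul_eq_mul]
  exact mul_nonneg (pow_nonneg hγ0 k) (nonneg_of_mem_rowStochastic (pow_mem hA k))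

end Resolvent

variable [Fintype n] {B : Matrix n n ℝ}

theorem isUnit_one_sub_smul_of_mem_colStochastic (hB : B ∈ colStochastic ℝ n)
    (hγ0 : 0 ≤ γ) (hγ1 : γ < 1) : IsUnit (1 - γ • B) := by
  rw [← isUnit_transpose, transpose_one_sub_smul]
  exact isUnit_one_sub_smul_of_mem_rowStochastic
    (transpose_mem_rowStochastic_iff_mem_colStochastic.2 hB) hγ0 hγ1

theorem inv_one_sub_smul_nonneg_of_mem_colStochastic (hB : B ∈ colStochastic ℝ n)
    (hγ0 : 0 ≤ γ) (hγ1 : γ < 1) (i j : n) : 0 ≤ (1 - γ • B)⁻¹ i j := by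
  rw [← transpose_apply (1 - γ • B)⁻¹, transpose_nonsing_inv, transpose_one_sub_smul]
  exact inv_one_sub_smul_nonneg_of_mem_rowStochastic
    (transpose_mem_rowStochastic_iff_mem_colStochastic.2 hB) hγ0 hγ1 j i

theorem one_vecMul_inv_one_sub_smul_of_mem_colStochastic (hB : B ∈ colStochastic ℝ n)
    (hγ0 : 0 ≤ γ) (hγ1 : γ < 1) : 1 ᵥ* (1 - γ • B)⁻¹ = (1 - γ)⁻¹ • 1 := by
  have hdet :=
    (isUnit_iff_isUnit_det _).1 (isUnit_one_sub_smul_of_mem_colStochastic hB hγ0 hγ1)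
  have hrow : 1 ᵥ* (1 - γ • B) = (1 - γ) • 1 := by
    rw [vecMul_sub, vecMul_one, vecMul_smul, one_vecMul_of_mem_colStochastic hB, sub_smul,
      one_smul]
  calc 1 ᵥ* (1 - γ • B)⁻¹ = (1 - γ)⁻¹ • ((1 ᵥ* (1 - γ • B)) ᵥ* (1 - γ • B)⁻¹) := by
        rw [hrow, smul_vecMul, smul_smul, inv_mul_cancel₀ (by linarith), one_smul]
    _ = (1 - γ)⁻¹ • 1 := by rw [vecMul_vecMul, mul_nonsing_inv _ hdet, vecMul_one]

section Derivative

attribute [local instance] Matrix.linftyOpNormedRing Matrix.linftyOpNormedAlgebra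

variable {E : Type*} [NormedAddCommGroup E] [NormedSpace ℝ E]

noncomputable def mulVecCLM (v : n → ℝ) : Matrix n n ℝ →L[ℝ] n → ℝ :=
  LinearMap.toContinuousLinearMap ((mulVecBilin ℝ ℝ).flip v)

theorem differentiableAt_of_forall_apply {F : E → Matrix n n ℝ} {x : E}
    (h : ∀ i j, DifferentiableAt ℝ (fun y => F y i j) x) : DifferentiableAt ℝ F x := by
  have hF : F = fun y => ∑ i, ∑ j, F y i j • single i j (1 : ℝ) := by
    funext y
    simp only [smul_single, smul_eq_mul, mul_one]
    exact matrix_eq_sum_single (F y)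
  rw [hF]
  exact .fun_sum fun i _ => .fun_sum fun j _ => (h i j).smul_const _

theorem hasFDerivAt_inv_mulVec_dotProduct {M : E → Matrix n n ℝ} {M' : E →L[ℝ] Matrix n n ℝ}
    {R : E → n → ℝ} {R' : E →L[ℝ] n → ℝ} {x : E} (ρ : n → ℝ)
    (hM : HasFDerivAt M M' x) (hR : HasFDerivAt R R' x) (hunit : IsUnit (M x)) :
    ∃ L : E →L[ℝ] ℝ, HasFDerivAt (fun y => ((M y)⁻¹ *ᵥ ρ) ⬝ᵥ R y) L x ∧
      ∀ u, L u = ((M x)⁻¹ *ᵥ ρ) ⬝ᵥ R' u - (R x ᵥ* (M x)⁻¹) ⬝ᵥ (M' u *ᵥ ((M x)⁻¹ *ᵥ ρ)) := by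
  obtain ⟨U, hU⟩ := hunit
  simp_rw [nonsing_inv_eq_ringInverse, ← hU, Ring.inverse_unit]
  let D' : E →L[ℝ] n → ℝ :=
    (mulVecCLM ρ).comp ((-ContinuousLinearMap.mulLeftRight ℝ _ ↑U⁻¹ ↑U⁻¹).comp M')
  have hD' : ∀ u, D' u = -((↑U⁻¹ : Matrix n n ℝ) * M' u * (↑U⁻¹ : Matrix n n ℝ)) *ᵥ ρ :=
    fun _ => rfl
  have hinv : HasFDerivAt (fun y => Ring.inverse (M y) *ᵥ ρ) D' x :=
    (mulVecCLM ρ).hasFDerivAt.comp x ((hU ▸ hasFDerivAt_ringInverse U).comp x hM)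
  refine ⟨_, HasFDerivAt.fun_sum fun i _ =>
    (hasFDerivAt_pi'.1 hinv i).fun_mul (hasFDerivAt_pi'.1 hR i), fun u => ?_⟩
  simp only [_root_.sum_apply, _root_.add_apply, _root_.smul_apply,
    ContinuousLinearMap.comp_apply, ContinuousLinearMap.proj_apply, smul_eq_mul,
    Finset.sum_add_distrib, hD']
  rw [← hU, Ring.inverse_unit, sub_eq_add_neg, neg_mulVec, ← dotProduct_neg, ← mulVec_mulVec,
    ← mulVec_mulVec, ← dotProduct_mulVec, mulVec_neg]
  rfl

theorem differentiableAt_inv_mulVec_dotProduct {M : E → Matrix n n ℝ} {R : E → n → ℝ} {x : E}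
    (ρ : n → ℝ) (hM : DifferentiableAt ℝ M x) (hR : DifferentiableAt ℝ R x)
    (hunit : IsUnit (M x)) : DifferentiableAt ℝ (fun y => ((M y)⁻¹ *ᵥ ρ) ⬝ᵥ R y) x :=
  (hasFDerivAt_inv_mulVec_dotProduct ρ hM.hasFDerivAt hR.hasFDerivAt hunit).choose_spec.1
    |>.differentiableAt

end Derivative

end Matrix

theorem inPolicySimplex.apply_mem_stdSimplex {S A : Type*} [Fintype A]
    {x : EuclideanSpace ℝ (S × A)} (hx : inPolicySimplex x) (s : S) :
    (fun a => x (s, a)) ∈ stdSimplex ℝ A :=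
  ⟨fun a => hx.1 (s, a), hx.2 s⟩

section MarkovGame

variable {S Av Aa : Type*} (P : S → Av → Aa → S → ℝ) (r : S → Av → Aa → ℝ) (γ : ℝ)

theorem inducedMatrix_mem_colStochastic_s11 [Fintype S] [DecidableEq S] [Fintype Av] [Fintype Aa]
    (hP0 : ∀ s av aa s', 0 ≤ P s av aa s') (hP1 : ∀ s av aa, ∑ s', P s av aa s' = 1)
    {πν : S → Av → ℝ} {πα : S → Aa → ℝ} (hν : ∀ s, πν s ∈ stdSimplex ℝ Av)
    (hα : ∀ s, πα s ∈ stdSimplex ℝ Aa) : inducedMatrix P πν πα ∈ colStochastic ℝ S := by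
  refine mem_colStochastic_iff_sum.2 ⟨fun s' s => ?_, fun s => ?_⟩
  · exact Finset.sum_nonneg fun av _ => Finset.sum_nonneg fun aa _ =>
      mul_nonneg (mul_nonneg ((hν s).1 av) ((hα s).1 aa)) (hP0 s av aa s')
  · simp only [inducedMatrix, of_apply]
    rw [Finset.sum_comm]
    simp_rw [Finset.sum_comm (γ := S), ← Finset.mul_sum, hP1, mul_one, ← Finset.mul_sum,
      (hα _).2, mul_one, (hν s).2]

/-- The action value `Q(s, a)` of the victim's action `a` against the attacker's policy `πα`,
given the state values `V`. -/
noncomputable def actionValue [Fintype S] [Fintype Aa] (πα : S → Aa → ℝ) (V : S → ℝ) (s : S)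
    (a : Av) : ℝ :=
  ∑ aa, πα s aa * (r s a aa + γ * ∑ s', P s a aa s' * V s')

theorem marginalReward_mem_Icc [Fintype Av] [Fintype Aa] (hr0 : ∀ s av aa, 0 ≤ r s av aa)
    (hr1 : ∀ s av aa, r s av aa ≤ 1) {πν : S → Av → ℝ} {πα : S → Aa → ℝ}
    (hν : ∀ s, πν s ∈ stdSimplex ℝ Av) (hα : ∀ s, πα s ∈ stdSimplex ℝ Aa) (s : S) :
    marginalReward r πν πα s ∈ Set.Icc 0 1 := by
  have hw : ∀ av aa, 0 ≤ πν s av * πα s aa := fun av aa =>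
    mul_nonneg ((hν s).1 av) ((hα s).1 aa)
  refine ⟨Finset.sum_nonneg fun av _ => Finset.sum_nonneg fun aa _ =>
    mul_nonneg (hw av aa) (hr0 s av aa), ?_⟩
  calc marginalReward r πν πα s ≤ ∑ av, ∑ aa, πν s av * πα s aa :=
        Finset.sum_le_sum fun av _ => Finset.sum_le_sum fun aa _ =>
          mul_le_of_le_one_right (hw av aa) (hr1 s av aa)
    _ = 1 := by rw [← Finset.sum_mul_sum, (hν s).2, (hα s).2, mul_one]

theorem actionValue_mem_Icc [Fintype S] [Fintype Aa] (hP0 : ∀ s av aa s', 0 ≤ P s av aa s')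
    (hP1 : ∀ s av aa, ∑ s', P s av aa s' = 1) (hr0 : ∀ s av aa, 0 ≤ r s av aa)
    (hr1 : ∀ s av aa, r s av aa ≤ 1) (hγ0 : 0 ≤ γ) (hγ1 : γ < 1) {πα : S → Aa → ℝ}
    (hα : ∀ s, πα s ∈ stdSimplex ℝ Aa) {V : S → ℝ} (hV : ∀ s, V s ∈ Set.Icc 0 (1 - γ)⁻¹)
    (s : S) (a : Av) : actionValue P r γ πα V s a ∈ Set.Icc 0 (1 - γ)⁻¹ := by
  have hnext : ∀ aa, ∑ s', P s a aa s' * V s' ∈ Set.Icc 0 (1 - γ)⁻¹ := fun aa =>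
    ⟨Finset.sum_nonneg fun s' _ => mul_nonneg (hP0 s a aa s') (hV s').1,
      calc ∑ s', P s a aa s' * V s' ≤ ∑ s', P s a aa s' * (1 - γ)⁻¹ :=
            Finset.sum_le_sum fun s' _ => mul_le_mul_of_nonneg_left (hV s').2 (hP0 s a aa s')
        _ = (1 - γ)⁻¹ := by rw [← Finset.sum_mul, hP1, one_mul]⟩
  have hstep : ∀ aa, r s a aa + γ * ∑ s', P s a aa s' * V s' ∈ Set.Icc 0 (1 - γ)⁻¹ := by
    intro aa
    have h1γ : 0 < 1 - γ := by linarith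
    have hmid : 1 + γ * (1 - γ)⁻¹ = (1 - γ)⁻¹ := by field_simp; ring
    constructor
    · exact add_nonneg (hr0 s a aa) (mul_nonneg hγ0 (hnext aa).1)
    · rw [← hmid]
      gcongr
      exacts [hr1 s a aa, (hnext aa).2]
  constructor
  · exact Finset.sum_nonneg fun aa _ => mul_nonneg ((hα s).1 aa) (hstep aa).1
  · calc actionValue P r γ πα V s a ≤ ∑ aa, πα s aa * (1 - γ)⁻¹ :=
          Finset.sum_le_sum fun aa _ => mul_le_mul_of_nonneg_left (hstep aa).2 ((hα s).1 aa)
      _ = (1 - γ)⁻¹ := by rw [← Finset.sum_mul, (hα s).2, one_mul]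

/-- With `d` the occupancy and `V` the state values, the left side is the derivative of the value
along the victim-policy direction `u` (see `Matrix.hasFDerivAt_inv_mulVec_dotProduct`). -/
theorem dotProduct_marginalReward_add_dotProduct_inducedMatrix_mulVec [Fintype S] [Fintype Av]
    [Fintype Aa] (πα : S → Aa → ℝ) (V d : S → ℝ) (u : S → Av → ℝ) :
    d ⬝ᵥ marginalReward r u πα + γ * (V ⬝ᵥ (inducedMatrix P u πα *ᵥ d)) =
      ∑ s, ∑ a, u s a * (d s * actionValue P r γ πα V s a) := by
  simp only [dotProduct, mulVec, marginalReward, inducedMatrix, of_apply, actionValue,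
    Finset.mul_sum, Finset.sum_mul, mul_add, Finset.sum_add_distrib]
  congr 1
  · exact Finset.sum_congr rfl fun s _ => Finset.sum_congr rfl fun a _ =>
      Finset.sum_congr rfl fun aa _ => by ring
  · rw [Finset.sum_comm]
    refine Finset.sum_congr rfl fun s _ => ?_
    rw [Finset.sum_comm]
    refine Finset.sum_congr rfl fun a _ => ?_
    rw [Finset.sum_comm]
    exact Finset.sum_congr rfl fun aa _ => Finset.sum_congr rfl fun s' _ => by ring

theorem norm_toLp_mul_le [Fintype S] [Fintype Av] {d : S → ℝ} {Q : S → Av → ℝ} {K : ℝ}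
    (hd : ∀ s, 0 ≤ d s) (hK : 0 ≤ K) (hQ : ∀ s a, |Q s a| ≤ K) :
    ‖(WithLp.toLp 2 fun p : S × Av => d p.1 * Q p.1 p.2 : EuclideanSpace ℝ (S × Av))‖ ≤
      √(Fintype.card Av) * (∑ s, d s) * K := by
  have hsum : 0 ≤ ∑ s, d s := Finset.sum_nonneg fun s _ => hd s
  rw [EuclideanSpace.norm_eq, Real.sqrt_le_left (by positivity)]
  calc ∑ p : S × Av, ‖d p.1 * Q p.1 p.2‖ ^ 2 = ∑ s, ∑ a, d s ^ 2 * Q s a ^ 2 := by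
        simp only [Fintype.sum_prod_type, Real.norm_eq_abs, sq_abs, mul_pow]
    _ ≤ ∑ s, ∑ _a : Av, d s ^ 2 * K ^ 2 := by
        refine Finset.sum_le_sum fun s _ => Finset.sum_le_sum fun a _ =>
          mul_le_mul_of_nonneg_left ?_ (sq_nonneg _)
        exact sq_le_sq' (abs_le.1 (hQ s a)).1 (abs_le.1 (hQ s a)).2
    _ = Fintype.card Av * K ^ 2 * ∑ s, d s ^ 2 := by
        simp only [Finset.sum_const, Finset.card_univ, nsmul_eq_mul, Finset.mul_sum]
        exact Finset.sum_congr rfl fun s _ => by ring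
    _ ≤ Fintype.card Av * K ^ 2 * (∑ s, d s) ^ 2 := by
        gcongr
        exact Finset.sum_sq_le_sq_sum_of_nonneg fun s _ => hd s
    _ = (√(Fintype.card Av) * (∑ s, d s) * K) ^ 2 := by
        rw [mul_pow, mul_pow, Real.sq_sqrt (Nat.cast_nonneg _)]
        ring

end MarkovGame

section Values

variable {S Av Aa : Type*} [Fintype S] [DecidableEq S] [Fintype Av] [Fintype Aa]
  (P : S → Av → Aa → S → ℝ) (r : S → Av → Aa → ℝ) (γ : ℝ) (ρ : S → ℝ)

noncomputable def policyValue (πν : S → Av → ℝ) (πα : S → Aa → ℝ) : ℝ :=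
  ((1 - γ • inducedMatrix P πν πα)⁻¹ *ᵥ ρ) ⬝ᵥ marginalReward r πν πα

noncomputable def occupancy (πν : S → Av → ℝ) (πα : S → Aa → ℝ) : S → ℝ :=
  (1 - γ • inducedMatrix P πν πα)⁻¹ *ᵥ ρ

noncomputable def stateValue (πν : S → Av → ℝ) (πα : S → Aa → ℝ) : S → ℝ :=
  marginalReward r πν πα ᵥ* (1 - γ • inducedMatrix P πν πα)⁻¹

variable {P γ} {πν : S → Av → ℝ} {πα : S → Aa → ℝ}

theorem occupancy_nonneg (hB : inducedMatrix P πν πα ∈ colStochastic ℝ S) (hγ0 : 0 ≤ γ)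
    (hγ1 : γ < 1) (hρ0 : ∀ s, 0 ≤ ρ s) (s : S) : 0 ≤ occupancy P γ ρ πν πα s :=
  Finset.sum_nonneg fun t _ =>
    mul_nonneg (inv_one_sub_smul_nonneg_of_mem_colStochastic hB hγ0 hγ1 s t) (hρ0 t)

theorem sum_occupancy (hB : inducedMatrix P πν πα ∈ colStochastic ℝ S) (hγ0 : 0 ≤ γ)
    (hγ1 : γ < 1) (hρ1 : ∑ s, ρ s = 1) : ∑ s, occupancy P γ ρ πν πα s = (1 - γ)⁻¹ := by
  have h := congrArg (· ⬝ᵥ ρ) (one_vecMul_inv_one_sub_smul_of_mem_colStochastic hB hγ0 hγ1)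
  simp only [← dotProduct_mulVec, smul_dotProduct, one_dotProduct, hρ1, smul_eq_mul,
    mul_one] at h
  exact h

theorem stateValue_mem_Icc (hB : inducedMatrix P πν πα ∈ colStochastic ℝ S)
    (hγ0 : 0 ≤ γ) (hγ1 : γ < 1) (hr : ∀ s, marginalReward r πν πα s ∈ Set.Icc 0 1) (t : S) :
    stateValue P r γ πν πα t ∈ Set.Icc 0 (1 - γ)⁻¹ := by
  have hD := inv_one_sub_smul_nonneg_of_mem_colStochastic hB hγ0 hγ1
  have hcol := congrFun (one_vecMul_inv_one_sub_smul_of_mem_colStochastic hB hγ0 hγ1) t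
  simp only [vecMul, dotProduct, one_mul, Pi.smul_apply, Pi.one_apply, smul_eq_mul,
    mul_one] at hcol
  refine ⟨Finset.sum_nonneg fun s _ => mul_nonneg (hr s).1 (hD s t), hcol ▸ ?_⟩
  exact Finset.sum_le_sum fun s _ => mul_le_of_le_one_left (hD s t) (hr s).2

end Values

section VictimGradient

attribute [local instance] Matrix.linftyOpNormedRing Matrix.linftyOpNormedAlgebra

variable {S Av Aa : Type*} [Fintype S] [Fintype Av] [Fintype Aa]
  (P : S → Av → Aa → S → ℝ) (r : S → Av → Aa → ℝ) (γ : ℝ) (ρ : S → ℝ)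

noncomputable def inducedMatrixVictimCLM (πα : S → Aa → ℝ) :
    EuclideanSpace ℝ (S × Av) →L[ℝ] Matrix S S ℝ :=
  LinearMap.toContinuousLinearMap
    { toFun := fun x => inducedMatrix P (fun s a => x (s, a)) πα
      map_add' := fun x y => by
        ext
        simp only [inducedMatrix, of_apply, Matrix.add_apply, PiLp.add_apply, add_mul,
          Finset.sum_add_distrib]
      map_smul' := fun c x => by
        ext
        simp only [inducedMatrix, of_apply, Matrix.smul_apply, PiLp.smul_apply, smul_eq_mul,
          RingHom.id_apply, Finset.mul_sum, mul_assoc] }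

noncomputable def marginalRewardVictimCLM (πα : S → Aa → ℝ) :
    EuclideanSpace ℝ (S × Av) →L[ℝ] S → ℝ :=
  LinearMap.toContinuousLinearMap
    { toFun := fun x => marginalReward r (fun s a => x (s, a)) πα
      map_add' := fun x y => by
        ext
        simp only [marginalReward, Pi.add_apply, PiLp.add_apply, add_mul,
          Finset.sum_add_distrib]
      map_smul' := fun c x => by
        ext
        simp only [marginalReward, Pi.smul_apply, PiLp.smul_apply, smul_eq_mul,
          RingHom.id_apply, Finset.mul_sum, mul_assoc] }

@[simp]
theorem inducedMatrixVictimCLM_apply (πα : S → Aa → ℝ) (x : EuclideanSpace ℝ (S × Av)) :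
    inducedMatrixVictimCLM P πα x = inducedMatrix P (fun s a => x (s, a)) πα := rfl

@[simp]
theorem marginalRewardVictimCLM_apply (πα : S → Aa → ℝ) (x : EuclideanSpace ℝ (S × Av)) :
    marginalRewardVictimCLM r πα x = marginalReward r (fun s a => x (s, a)) πα := rfl

variable [DecidableEq S] {P γ} {πα : S → Aa → ℝ} {ν : EuclideanSpace ℝ (S × Av)}

theorem hasGradientAt_policyValue_victim
    (hunit : IsUnit (1 - γ • inducedMatrix P (fun s a => ν (s, a)) πα)) :
    HasGradientAt (fun x : EuclideanSpace ℝ (S × Av) =>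
        policyValue P r γ ρ (fun s a => x (s, a)) πα)
      (WithLp.toLp 2 fun p => occupancy P γ ρ (fun s a => ν (s, a)) πα p.1 *
        actionValue P r γ πα (stateValue P r γ (fun s a => ν (s, a)) πα) p.1 p.2) ν := by
  have hM : HasFDerivAt (fun x => 1 - γ • inducedMatrixVictimCLM P πα x)
      (-(γ • inducedMatrixVictimCLM P πα)) ν :=
    ((inducedMatrixVictimCLM P πα).hasFDerivAt.const_smul γ).const_sub 1
  obtain ⟨L, hL, hLu⟩ := hasFDerivAt_inv_mulVec_dotProduct ρ hM
    (marginalRewardVictimCLM r πα).hasFDerivAt hunit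
  refine hasGradientAt_iff_hasFDerivAt.2 (hL.congr_fderiv ?_)
  ext u
  rw [hLu, InnerProductSpace.toDual_apply_apply]
  simp only [_root_.neg_apply, _root_.smul_apply, inducedMatrixVictimCLM_apply,
    marginalRewardVictimCLM_apply, neg_mulVec, smul_mulVec, dotProduct_neg, dotProduct_smul,
    smul_eq_mul, sub_neg_eq_add, PiLp.inner_apply, RCLike.inner_apply, conj_trivial,
    Fintype.sum_prod_type]
  exact dotProduct_marginalReward_add_dotProduct_inducedMatrix_mulVec P r γ πα _ _ _

theorem differentiableAt_Jobj (ε : ℝ) (pihat : S → Aa → ℝ) {α : EuclideanSpace ℝ (S × Aa)}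
    (hunit : IsUnit (1 - γ • inducedMatrix P (fun s a => ν (s, a))
      fun s a => (1 - ε) * pihat s a + ε * α (s, a))) :
    DifferentiableAt ℝ
      (fun pr : EuclideanSpace ℝ (S × Av) × EuclideanSpace ℝ (S × Aa) =>
        Jobj P r γ ε ρ pihat pr.1 pr.2) (ν, α) := by
  show DifferentiableAt ℝ (fun pr : EuclideanSpace ℝ (S × Av) × EuclideanSpace ℝ (S × Aa) =>
    policyValue P r γ ρ (fun s a => pr.1 (s, a))
      fun s a => (1 - ε) * pihat s a + ε * pr.2 (s, a)) (ν, α)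
  unfold policyValue
  refine differentiableAt_inv_mulVec_dotProduct ρ ?_ ?_ hunit
  · refine differentiableAt_of_forall_apply fun i j => ?_
    simp only [Matrix.sub_apply, Matrix.smul_apply, inducedMatrix, of_apply]
    fun_prop
  · refine differentiableAt_pi.2 fun s => ?_
    simp only [marginalReward]
    fun_prop

end VictimGradient

theorem victim_gradient_bound_general {S Av Aa : Type*}
    [Fintype S] [DecidableEq S]
    [Fintype Av] [Fintype Aa]
    (P : S → Av → Aa → S → ℝ)
    (hP0 : ∀ s av aa s', 0 ≤ P s av aa s')
    (hP1 : ∀ s av aa, ∑ s', P s av aa s' = 1)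
    (r : S → Av → Aa → ℝ)
    (hr0 : ∀ s av aa, 0 ≤ r s av aa) (hr1 : ∀ s av aa, r s av aa ≤ 1)
    (γ : ℝ) (hγ0 : 0 ≤ γ) (hγ1 : γ < 1)
    (ρ : S → ℝ) (hρ0 : ∀ s, 0 ≤ ρ s) (hρ1 : ∑ s, ρ s = 1)
    (pihat : S → Aa → ℝ)
    (hpihat0 : ∀ s a, 0 ≤ pihat s a) (hpihat1 : ∀ s, ∑ a, pihat s a = 1)
    (ε : ℝ) (hε0 : 0 ≤ ε) (hε1 : ε ≤ 1)
    (ν : EuclideanSpace ℝ (S × Av)) (α : EuclideanSpace ℝ (S × Aa))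
    (hν : inPolicySimplex ν) (hα : inPolicySimplex α) :
    DifferentiableAt ℝ
        (fun pr : EuclideanSpace ℝ (S × Av) × EuclideanSpace ℝ (S × Aa) =>
          Jobj P r γ ε ρ pihat pr.1 pr.2) (ν, α) ∧
      ‖gradient (fun ν' => Jobj P r γ ε ρ pihat ν' α) ν‖ ≤
        Real.sqrt (Fintype.card Av) / (1 - γ) ^ 2 := by
  have hmix : ∀ s, (fun a => (1 - ε) * pihat s a + ε * α (s, a)) ∈ stdSimplex ℝ Aa :=
    fun s => convex_stdSimplex ℝ Aa ⟨hpihat0 s, hpihat1 s⟩ (hα.apply_mem_stdSimplex s)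
      (by linarith) hε0 (by ring)
  have hν' := hν.apply_mem_stdSimplex
  have hB := inducedMatrix_mem_colStochastic_s11 P hP0 hP1 hν' hmix
  have hunit := isUnit_one_sub_smul_of_mem_colStochastic hB hγ0 hγ1
  refine ⟨differentiableAt_Jobj r ρ ε pihat hunit, ?_⟩
  have hgrad : HasGradientAt (fun ν' => Jobj P r γ ε ρ pihat ν' α) _ ν :=
    hasGradientAt_policyValue_victim r ρ hunit
  have hQ := actionValue_mem_Icc P r γ hP0 hP1 hr0 hr1 hγ0 hγ1 hmix
    (stateValue_mem_Icc r hB hγ0 hγ1 (marginalReward_mem_Icc r hr0 hr1 hν' hmix))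
  have hK : 0 ≤ (1 - γ)⁻¹ := inv_nonneg.2 (by linarith)
  calc ‖gradient (fun ν' => Jobj P r γ ε ρ pihat ν' α) ν‖
      ≤ √(Fintype.card Av) * (∑ s, occupancy P γ ρ _ _ s) * (1 - γ)⁻¹ := by
        rw [hgrad.gradient]
        exact norm_toLp_mul_le (occupancy_nonneg ρ hB hγ0 hγ1 hρ0) hK
          fun s a => (abs_of_nonneg (hQ s a).1).trans_le (hQ s a).2
    _ = √(Fintype.card Av) / (1 - γ) ^ 2 := by
        rw [sum_occupancy ρ hB hγ0 hγ1 hρ1]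
        field_simp

/-- Lipschitz gradient bound in the victim block:
`J_{ε_π}` is differentiable at every point of the product of simplices and
`‖∇_ν J_{ε_π}(ν, α)‖ ≤ √|A_ν| / (1-γ)²`. -/
theorem victim_gradient_bound {S Av Aa : Type*}
    [Fintype S] [Nonempty S] [DecidableEq S]
    [Fintype Av] [Nonempty Av] [Fintype Aa] [Nonempty Aa]
    (P : S → Av → Aa → S → ℝ)
    (hP0 : ∀ s av aa s', 0 ≤ P s av aa s')
    (hP1 : ∀ s av aa, ∑ s', P s av aa s' = 1)
    (r : S → Av → Aa → ℝ)
    (hr0 : ∀ s av aa, 0 ≤ r s av aa) (hr1 : ∀ s av aa, r s av aa ≤ 1)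
    (γ : ℝ) (hγ0 : 0 ≤ γ) (hγ1 : γ < 1)
    (ρ : S → ℝ) (hρ0 : ∀ s, 0 ≤ ρ s) (hρ1 : ∑ s, ρ s = 1)
    (pihat : S → Aa → ℝ)
    (hpihat0 : ∀ s a, 0 ≤ pihat s a) (hpihat1 : ∀ s, ∑ a, pihat s a = 1)
    (ε : ℝ) (hε0 : 0 ≤ ε) (hε1 : ε ≤ 1)
    (ν : EuclideanSpace ℝ (S × Av)) (α : EuclideanSpace ℝ (S × Aa))
    (hν : inPolicySimplex ν) (hα : inPolicySimplex α) :
    DifferentiableAt ℝ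
        (fun pr : EuclideanSpace ℝ (S × Av) × EuclideanSpace ℝ (S × Aa) =>
          Jobj P r γ ε ρ pihat pr.1 pr.2) (ν, α) ∧
      ‖gradient (fun ν' => Jobj P r γ ε ρ pihat ν' α) ν‖ ≤
        Real.sqrt (Fintype.card Av) / (1 - γ) ^ 2 :=
  victim_gradient_bound_general P hP0 hP1 r hr0 hr1 γ hγ0 hγ1 ρ hρ0 hρ1 pihat hpihat0 hpihat1 ε hε0
    hε1 ν α hν hα
end

section
/- (Reduction to a modified Markov game: value equality.) In a finite two-player Markov game with transition kernel P, reward r : S × A_ν × A_α → [0,1], discount γ ∈ [0,1), initial distribution ρ, benign attacker policy π̂_α, and ε_π ∈ [0,1], define the modified reward r^mix(s, a_ν, a_α) = (1-ε_π) ∑_{a'_α} r(s, a_ν, a'_α) π̂_α(a'_α|s) + ε_π r(s, a_ν, a_α) and the modified transition kernel P^mix(s'|s, a_ν, a_α) = (1-ε_π) ∑_{a'_α} P(s'|s, a_ν, a'_α) π̂_α(a'_α|s) + ε_π P(s'|s, a_ν, a_α). Let Ṽ_ρ denote the value function of the modified game (with kernel P^mix and reward r^mix). Then for all policies π_ν,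 π_α: V_ρ(π_ν, (1-ε_π)π̂_α + ε_π π_α) = Ṽ_ρ(π_ν, π_α). -/
open scoped BigOperators
open Matrix

/-- Key algebraic identity: marginalizing the mixed policy against a kernel value
equals marginalizing the attacker policy against the mixed kernel value. -/
lemma mix_sum_eq {Aa : Type*} [Fintype Aa] (c ε : ℝ) (pihat pialpha f : Aa → ℝ)
    (h1 : ∑ a, pialpha a = 1) :
    ∑ aa, c * ((1 - ε) * pihat aa + ε * pialpha aa) * f aa
      = ∑ aa, c * pialpha aa * ((1 - ε) * (∑ a', f a' * pihat a') + ε * f aa) := by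
  have L : ∑ aa, c * ((1 - ε) * pihat aa + ε * pialpha aa) * f aa
      = c * (1 - ε) * (∑ aa, f aa * pihat aa) + c * ε * (∑ aa, pialpha aa * f aa) := by
    rw [Finset.mul_sum, Finset.mul_sum, ← Finset.sum_add_distrib]
    exact Finset.sum_congr rfl fun aa _ => by ring
  have R : ∑ aa, c * pialpha aa * ((1 - ε) * (∑ a', f a' * pihat a') + ε * f aa)
      = (∑ aa, pialpha aa) * (c * (1 - ε) * (∑ aa, f aa * pihat aa))
        + c * ε * (∑ aa, pialpha aa * f aa) := by
    have h : ∀ aa : Aa, c * pialpha aa * ((1 - ε) * (∑ a', f a' * pihat a') + ε * f aa)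
        = pialpha aa * (c * (1 - ε) * (∑ a', f a' * pihat a'))
          + c * ε * (pialpha aa * f aa) := fun aa => by ring
    simp_rw [h]
    rw [Finset.sum_add_distrib, ← Finset.sum_mul, ← Finset.mul_sum]
  rw [L, R, h1, one_mul]

/-- reduction to a modified Markov game, value equality:
`V_ρ(π_ν, (1-ε_π)π̂_α + ε_π π_α) = Ṽ_ρ(π_ν, π_α)`, where `Ṽ` is the value of the
modified game with kernel `P^mix` and reward `r^mix`. -/
theorem modified_game_value_eq {S Av Aa : Type*}
    [Fintype S] [Nonempty S] [DecidableEq S]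
    [Fintype Av] [Nonempty Av] [Fintype Aa] [Nonempty Aa]
    (P : S → Av → Aa → S → ℝ)
    (hP0 : ∀ s av aa s', 0 ≤ P s av aa s')
    (hP1 : ∀ s av aa, ∑ s', P s av aa s' = 1)
    (r : S → Av → Aa → ℝ)
    (hr0 : ∀ s av aa, 0 ≤ r s av aa) (hr1 : ∀ s av aa, r s av aa ≤ 1)
    (γ : ℝ) (hγ0 : 0 ≤ γ) (hγ1 : γ < 1)
    (ρ : S → ℝ) (hρ0 : ∀ s, 0 ≤ ρ s) (hρ1 : ∑ s, ρ s = 1)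
    (pihat : S → Aa → ℝ)
    (hpihat0 : ∀ s a, 0 ≤ pihat s a) (hpihat1 : ∀ s, ∑ a, pihat s a = 1)
    (ε : ℝ) (hε0 : 0 ≤ ε) (hε1 : ε ≤ 1)
    (Pmix : S → Av → Aa → S → ℝ)
    (hPmix : ∀ s av aa s', Pmix s av aa s' =
      (1 - ε) * (∑ a', P s av a' s' * pihat s a') + ε * P s av aa s')
    (rmix : S → Av → Aa → ℝ)
    (hrmix : ∀ s av aa, rmix s av aa =
      (1 - ε) * (∑ a', r s av a' * pihat s a') + ε * r s av aa)
    (pinu : S → Av → ℝ)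
    (hpinu0 : ∀ s a, 0 ≤ pinu s a) (hpinu1 : ∀ s, ∑ a, pinu s a = 1)
    (pialpha : S → Aa → ℝ)
    (hpialpha0 : ∀ s a, 0 ≤ pialpha s a) (hpialpha1 : ∀ s, ∑ a, pialpha s a = 1) :
    valueV P r γ ρ pinu (fun s a => (1 - ε) * pihat s a + ε * pialpha s a) =
      valueV Pmix rmix γ ρ pinu pialpha := by
  have hM : inducedMatrix P pinu (fun s a => (1 - ε) * pihat s a + ε * pialpha s a)
      = inducedMatrix Pmix pinu pialpha := by
    ext s' s
    simp only [inducedMatrix, Matrix.of_apply]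
    refine Finset.sum_congr rfl fun av _ => ?_
    rw [mix_sum_eq (pinu s av) ε (pihat s) (pialpha s) (fun aa => P s av aa s')
      (hpialpha1 s)]
    exact Finset.sum_congr rfl fun aa _ => by rw [hPmix]
  have hR : marginalReward r pinu (fun s a => (1 - ε) * pihat s a + ε * pialpha s a)
      = marginalReward rmix pinu pialpha := by
    funext s
    simp only [marginalReward]
    refine Finset.sum_congr rfl fun av _ => ?_
    rw [mix_sum_eq (pinu s av) ε (pihat s) (pialpha s) (fun aa => r s av aa)
      (hpialpha1 s)]
    exact Finset.sum_congr rfl fun aa _ => by rw [hrmix]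
  unfold valueV
  rw [hM, hR]
end

section
/- (Lemma: gradient domination for the victim.) In a finite two-player Markov game with discount γ ∈ [0,1), reward r : S × A_ν × A_α → [0,1], initial distribution ρ with ρ(s) > 0 for all s, benign attacker policy π̂_α, and ε_π ∈ [0,1]: for any (ν, α) in the product of simplices Δ(A_ν)^{|S|} × Δ(A_α)^{|S|} and any ν* ∈ Δ(A_ν)^{|S|} maximizing ν' ↦ J_{ε_π}(ν', α) over Δ(A_ν)^{|S|}, one has max_{ν' ∈ Δ(A_ν)^{|S|}} J_{ε_π}(ν', α) - J_{ε_π}(ν, α) ≤ (1/(1-γ)) · max_{s ∈ S} (d_ρ^{π_{ν*}, (1-ε_π)π̂_α + ε_π π_α}(s) / ρ(s)) · max_{ν̄ ∈ Δ(A_ν)^{|S|}} ⟨∇_ν J_{ε_π}(ν, α), ν̄ - ν⟩. -/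
open scoped BigOperators RealInnerProductSpace
open Matrix

/-!
Once the attacker's policy `β` is fixed, the victim faces an MDP with kernel `∑ β P` and reward
`∑ β r`. For a direct policy `x` let `M_x` be its transition matrix, `u_x = (1 - γ M_x)⁻¹ ρ` its
(unnormalised) occupancy measure, `V_x` its value and `Q_x` its action values. Two identities
drive the proof: the gradient of the objective is `u_x(s) Q_x(s, a)`, and the performance
difference lemma `J(y) - J(x) = ∑ₛ u_y(s) A_x(y, s)`, where
`A_x(y, s) = ∑ₐ y(s, a) Q_x(s, a) - V_x(s)`, so that `⟪∇J(x), y - x⟫ = ∑ₛ u_x(s) A_x(y, s)`.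
The greedy policy `z` for `Q_x` maximises every `A_x(·, s)` and `A_x(z, ·) ≥ A_x(x, ·) = 0`, hence
`J(y) - J(x) ≤ ∑ u_y A_x(z) ≤ max (u_y / ρ) · ∑ ρ A_x(z) ≤ max (u_y / ρ) · ∑ u_x A_x(z)`, using
`ρ ≤ u_x` from the Neumann series of `(1 - γ M_x)⁻¹`; and `∑ u_x A_x(z)` is the maximum of
`⟪∇J(x), · - x⟫` over the simplex.
-/

namespace Matrix

variable {S : Type*} [Fintype S] [DecidableEq S]

section LinftyOpNorm

attribute [local instance] Matrix.linftyOpNormedAddCommGroup Matrix.linftyOpNormedRing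
  Matrix.linftyOpNormedAlgebra

lemma linfty_opNorm_le_one_of_mem_rowStochastic {M : Matrix S S ℝ}
    (hM : M ∈ rowStochastic ℝ S) : ‖M‖ ≤ 1 := by
  rw [linfty_opNorm_def, ← NNReal.coe_one, NNReal.coe_le_coe]
  refine Finset.sup_le fun i _ => le_of_eq ?_
  rw [← NNReal.coe_inj, NNReal.coe_sum, NNReal.coe_one, ← sum_row_of_mem_rowStochastic hM i]
  exact Finset.sum_congr rfl fun j _ => Real.norm_of_nonneg (nonneg_of_mem_rowStochastic hM)

lemma norm_smul_transpose_lt_one {M : Matrix S S ℝ} (hM : M ∈ colStochastic ℝ S)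
    {γ : ℝ} (hγ0 : 0 ≤ γ) (hγ1 : γ < 1) : ‖γ • Mᵀ‖ < 1 := by
  rw [norm_smul, Real.norm_of_nonneg hγ0]
  have := linfty_opNorm_le_one_of_mem_rowStochastic
    (transpose_mem_rowStochastic_iff_mem_colStochastic.mpr hM)
  nlinarith [norm_nonneg Mᵀ]

lemma isUnit_one_sub_smul_of_mem_colStochastic_s18 {M : Matrix S S ℝ}
    (hM : M ∈ colStochastic ℝ S) {γ : ℝ} (hγ0 : 0 ≤ γ) (hγ1 : γ < 1) :
    IsUnit (1 - γ • M) := by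
  have h := isUnit_one_sub_of_norm_lt_one (norm_smul_transpose_lt_one hM hγ0 hγ1)
  rwa [← transpose_one, ← transpose_smul, ← transpose_sub, isUnit_transpose] at h

lemma hasSum_geometric_of_mem_colStochastic {M : Matrix S S ℝ} (hM : M ∈ colStochastic ℝ S)
    {γ : ℝ} (hγ0 : 0 ≤ γ) (hγ1 : γ < 1) :
    HasSum (fun t : ℕ => (γ • M) ^ t) (1 - γ • M)⁻¹ := by
  have h := (hasSum_geom_series_inverse _ (norm_smul_transpose_lt_one hM hγ0 hγ1)).matrix_transpose
  have hinv : (Ring.inverse (1 - γ • Mᵀ))ᵀ = (1 - γ • M)⁻¹ := by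
    rw [← nonsing_inv_eq_ringInverse, transpose_nonsing_inv, transpose_sub, transpose_one,
      transpose_smul, transpose_transpose]
  rw [hinv] at h
  simpa only [← transpose_smul, ← transpose_pow, transpose_transpose] using h

end LinftyOpNorm

lemma hasSum_geometric_mulVec_of_mem_colStochastic {M : Matrix S S ℝ}
    (hM : M ∈ colStochastic ℝ S) {γ : ℝ} (hγ0 : 0 ≤ γ) (hγ1 : γ < 1) (ρ : S → ℝ) :
    HasSum (fun t : ℕ => γ ^ t • (M ^ t *ᵥ ρ)) ((1 - γ • M)⁻¹ *ᵥ ρ) := by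
  have h := (hasSum_geometric_of_mem_colStochastic hM hγ0 hγ1).map
    (mulVec.addMonoidHomLeft ρ) (continuous_id.matrix_mulVec continuous_const)
  simpa only [Function.comp_def, mulVec.addMonoidHomLeft, AddMonoidHom.coe_mk, ZeroHom.coe_mk,
    smul_pow, smul_mulVec] using h

lemma le_inv_one_sub_smul_mulVec_of_mem_colStochastic {M : Matrix S S ℝ}
    (hM : M ∈ colStochastic ℝ S) {γ : ℝ} (hγ0 : 0 ≤ γ) (hγ1 : γ < 1) {ρ : S → ℝ}
    (hρ : 0 ≤ ρ) : ρ ≤ (1 - γ • M)⁻¹ *ᵥ ρ := fun s => by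
  have h := Pi.hasSum.mp (hasSum_geometric_mulVec_of_mem_colStochastic hM hγ0 hγ1 ρ) s
  simpa using le_hasSum h 0 fun t _ => smul_nonneg (pow_nonneg hγ0 t)
    (nonneg_mulVec_of_mem_colStochastic (pow_mem hM t) hρ s)

end Matrix

lemma exists_greedy_policy {S A : Type*} [Fintype A] [Nonempty A] (Q : S → A → ℝ) :
    ∃ z : EuclideanSpace ℝ (S × A), inPolicySimplex z ∧
      ∀ y, inPolicySimplex y → ∀ s, ∑ a, y (s, a) * Q s a ≤ ∑ a, z (s, a) * Q s a := by
  classical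
  choose g _ hg using fun s => Finset.exists_max_image Finset.univ (Q s) Finset.univ_nonempty
  refine ⟨WithLp.toLp 2 fun p => if p.2 = g p.1 then 1 else 0,
    ⟨fun p => by positivity, fun s => by simp⟩, fun y hy s => ?_⟩
  simp only [ite_mul, one_mul, zero_mul, Finset.sum_ite_eq', Finset.mem_univ, if_true]
  calc ∑ a, y (s, a) * Q s a ≤ ∑ a, y (s, a) * Q s (g s) :=
        Finset.sum_le_sum fun a _ => mul_le_mul_of_nonneg_left (hg s a (Finset.mem_univ a)) (hy.1 _)
    _ = Q s (g s) := by rw [← Finset.sum_mul, hy.2, one_mul]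

namespace MDP

variable {S A : Type*} [Fintype S] [Fintype A]

def transitionMatrix (K : S → A → S → ℝ) : EuclideanSpace ℝ (S × A) →ₗ[ℝ] Matrix S S ℝ where
  toFun x := of fun s' s => ∑ a, x (s, a) * K s a s'
  map_add' x y := by
    ext s' s
    simp only [of_apply, PiLp.add_apply, Matrix.add_apply, add_mul, Finset.sum_add_distrib]
  map_smul' c x := by
    ext s' s
    simp only [of_apply, PiLp.smul_apply, smul_eq_mul, RingHom.id_apply, Matrix.smul_apply,
      Finset.mul_sum, mul_assoc]

def policyReward (q : S → A → ℝ) : EuclideanSpace ℝ (S × A) →ₗ[ℝ] S → ℝ where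
  toFun x s := ∑ a, x (s, a) * q s a
  map_add' x y := by
    ext s
    simp only [PiLp.add_apply, Pi.add_apply, add_mul, Finset.sum_add_distrib]
  map_smul' c x := by
    ext s
    simp only [PiLp.smul_apply, smul_eq_mul, RingHom.id_apply, Pi.smul_apply, Finset.mul_sum,
      mul_assoc]

def actionValue (K : S → A → S → ℝ) (q : S → A → ℝ) (γ : ℝ) (w : S → ℝ) (s : S) (a : A) : ℝ :=
  q s a + γ * ∑ s', K s a s' * w s'

lemma transitionMatrix_mem_colStochastic [DecidableEq S] {K : S → A → S → ℝ}
    (hK0 : ∀ s a s', 0 ≤ K s a s') (hK1 : ∀ s a, ∑ s', K s a s' = 1)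
    {x : EuclideanSpace ℝ (S × A)} (hx : inPolicySimplex x) :
    transitionMatrix K x ∈ colStochastic ℝ S := by
  refine mem_colStochastic_iff_sum.mpr ⟨fun s' s => ?_, fun s => ?_⟩
  · exact Finset.sum_nonneg fun a _ => mul_nonneg (hx.1 (s, a)) (hK0 s a s')
  · change ∑ s', ∑ a, x (s, a) * K s a s' = 1
    simp only [Finset.sum_comm (γ := S), ← Finset.mul_sum, hK1, mul_one, hx.2]

lemma policyReward_add_smul_vecMul_transitionMatrix {K : S → A → S → ℝ} {q : S → A → ℝ} {γ : ℝ}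
    (w : S → ℝ) (y : EuclideanSpace ℝ (S × A)) :
    policyReward q y + γ • (w ᵥ* transitionMatrix K y) =
      fun s => ∑ a, y (s, a) * actionValue K q γ w s a := by
  ext s
  change ∑ a, y (s, a) * q s a + γ * ∑ s', w s' * ∑ a, y (s, a) * K s a s' = _
  simp only [actionValue, mul_add, Finset.sum_add_distrib, Finset.mul_sum]
  congr 1
  rw [Finset.sum_comm]
  exact Finset.sum_congr rfl fun a _ => Finset.sum_congr rfl fun s' _ => by ring

variable [DecidableEq S] (K : S → A → S → ℝ) (q : S → A → ℝ) (γ : ℝ) (ρ : S → ℝ)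

noncomputable def occupancy (x : EuclideanSpace ℝ (S × A)) : S → ℝ :=
  (1 - γ • transitionMatrix K x)⁻¹ *ᵥ ρ

noncomputable def value (x : EuclideanSpace ℝ (S × A)) : S → ℝ :=
  policyReward q x ᵥ* (1 - γ • transitionMatrix K x)⁻¹

noncomputable def advantage (x z : EuclideanSpace ℝ (S × A)) (s : S) : ℝ :=
  ∑ a, z (s, a) * actionValue K q γ (value K q γ x) s a - value K q γ x s

noncomputable def objective (x : EuclideanSpace ℝ (S × A)) : ℝ :=
  occupancy K γ ρ x ⬝ᵥ policyReward q x

noncomputable def policyGradient (x : EuclideanSpace ℝ (S × A)) : EuclideanSpace ℝ (S × A) :=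
  WithLp.toLp 2 fun p => occupancy K γ ρ x p.1 * actionValue K q γ (value K q γ x) p.1 p.2

variable {K q γ ρ}

lemma value_vecMul_one_sub {x : EuclideanSpace ℝ (S × A)}
    (hx : IsUnit (1 - γ • transitionMatrix K x)) :
    value K q γ x ᵥ* (1 - γ • transitionMatrix K x) = policyReward q x := by
  rw [value, vecMul_vecMul, nonsing_inv_mul _ ((isUnit_iff_isUnit_det _).mp hx), vecMul_one]

lemma advantage_eq (x z : EuclideanSpace ℝ (S × A)) :
    advantage K q γ x z = policyReward q z - value K q γ x ᵥ* (1 - γ • transitionMatrix K z) := by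
  rw [vecMul_sub, vecMul_one, vecMul_smul, sub_sub_eq_add_sub,
    policyReward_add_smul_vecMul_transitionMatrix]
  rfl

lemma advantage_self {x : EuclideanSpace ℝ (S × A)} (hx : IsUnit (1 - γ • transitionMatrix K x)) :
    advantage K q γ x x = 0 := by
  rw [advantage_eq, value_vecMul_one_sub hx, sub_self]

lemma objective_eq_dotProduct_value (x : EuclideanSpace ℝ (S × A)) :
    objective K q γ ρ x = ρ ⬝ᵥ value K q γ x := by
  rw [objective, occupancy, dotProduct_comm, dotProduct_mulVec, value, dotProduct_comm]

lemma objective_sub_objective (x : EuclideanSpace ℝ (S × A)) {y : EuclideanSpace ℝ (S × A)}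
    (hy : IsUnit (1 - γ • transitionMatrix K y)) :
    objective K q γ ρ y - objective K q γ ρ x = occupancy K γ ρ y ⬝ᵥ advantage K q γ x y := by
  have hρ : (1 - γ • transitionMatrix K y) *ᵥ occupancy K γ ρ y = ρ := by
    rw [occupancy, mulVec_mulVec, mul_nonsing_inv _ ((isUnit_iff_isUnit_det _).mp hy), one_mulVec]
  rw [advantage_eq, dotProduct_sub, objective_eq_dotProduct_value x, ← hρ, dotProduct_comm,
    dotProduct_mulVec, dotProduct_comm, hρ, objective]

lemma inner_policyGradient (x h : EuclideanSpace ℝ (S × A)) :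
    ⟪policyGradient K q γ ρ x, h⟫ =
      occupancy K γ ρ x ⬝ᵥ fun s => ∑ a, h (s, a) * actionValue K q γ (value K q γ x) s a := by
  simp only [PiLp.inner_apply, Fintype.sum_prod_type, policyGradient, dotProduct, Finset.mul_sum,
    RCLike.inner_apply, conj_trivial]
  exact Finset.sum_congr rfl fun s _ => Finset.sum_congr rfl fun a _ => by ring

lemma inner_policyGradient_sub {x : EuclideanSpace ℝ (S × A)}
    (hx : IsUnit (1 - γ • transitionMatrix K x)) (y : EuclideanSpace ℝ (S × A)) :
    ⟪policyGradient K q γ ρ x, y - x⟫ = occupancy K γ ρ x ⬝ᵥ advantage K q γ x y := by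
  rw [inner_sub_right, inner_policyGradient, inner_policyGradient, ← dotProduct_sub,
    ← sub_zero (advantage K q γ x y), ← advantage_self hx]
  congr 1
  ext s
  simp only [Pi.sub_apply, advantage]
  ring

section Derivative

-- Any norm on matrices would do: it only serves to differentiate `Ring.inverse`.
attribute [local instance] Matrix.linftyOpNormedAddCommGroup Matrix.linftyOpNormedRing
  Matrix.linftyOpNormedAlgebra

lemma hasFDerivAt_ringInverse_one_sub_smul_transitionMatrix {x : EuclideanSpace ℝ (S × A)}
    (hx : IsUnit (1 - γ • transitionMatrix K x)) :
    HasFDerivAt (fun y => Ring.inverse (1 - γ • transitionMatrix K y))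
      ((-ContinuousLinearMap.mulLeftRight ℝ (Matrix S S ℝ) (1 - γ • transitionMatrix K x)⁻¹
        (1 - γ • transitionMatrix K x)⁻¹).comp (-(γ • (transitionMatrix K).toContinuousLinearMap)))
      x := by
  obtain ⟨u, hu⟩ := hx
  have h := hasFDerivAt_ringInverse (𝕜 := ℝ) u
  rw [← Ring.inverse_unit, hu, ← nonsing_inv_eq_ringInverse] at h
  exact h.comp x (((transitionMatrix K).toContinuousLinearMap.hasFDerivAt.const_smul γ).const_sub 1)

lemma hasGradientAt_objective {x : EuclideanSpace ℝ (S × A)}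
    (hx : IsUnit (1 - γ • transitionMatrix K x)) :
    HasGradientAt (objective K q γ ρ) (policyGradient K q γ ρ x) x := by
  set R : Matrix S S ℝ := (1 - γ • transitionMatrix K x)⁻¹
  let ev : S → Matrix S S ℝ →L[ℝ] ℝ := fun s =>
    (LinearMap.proj s ∘ₗ (mulVecBilin ℝ ℝ).flip ρ).toContinuousLinearMap
  let c : S → EuclideanSpace ℝ (S × A) →L[ℝ] ℝ := fun s =>
    (LinearMap.proj s ∘ₗ policyReward q).toContinuousLinearMap
  have hobj : objective K q γ ρ =
      fun y => ∑ s, ev s (Ring.inverse (1 - γ • transitionMatrix K y)) * c s y := by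
    ext y
    simp [objective, occupancy, nonsing_inv_eq_ringInverse, dotProduct, ev, c]
  rw [hasGradientAt_iff_hasFDerivAt, hobj]
  refine (HasFDerivAt.fun_sum fun s _ =>
    ((ev s).hasFDerivAt.comp x (hasFDerivAt_ringInverse_one_sub_smul_transitionMatrix hx)).mul
      (c s).hasFDerivAt) |>.congr_fderiv ?_
  ext h
  simp only [_root_.sum_apply, _root_.add_apply, _root_.smul_apply, smul_eq_mul]
  change ∑ s, ((Ring.inverse (1 - γ • transitionMatrix K x) *ᵥ ρ) s * policyReward q h s +
      policyReward q x s * ((-(R * -(γ • transitionMatrix K h) * R)) *ᵥ ρ) s) = _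
  have hdR : -(R * -(γ • transitionMatrix K h) * R) = γ • (R * (transitionMatrix K h * R)) := by
    rw [mul_neg, neg_mul, neg_neg, Matrix.mul_smul, Matrix.smul_mul, Matrix.mul_assoc]
  rw [InnerProductSpace.toDual_apply_apply, inner_policyGradient,
    ← policyReward_add_smul_vecMul_transitionMatrix, dotProduct_add, Finset.sum_add_distrib,
    ← nonsing_inv_eq_ringInverse, hdR]
  congr 1
  change policyReward q x ⬝ᵥ _ = _
  rw [smul_mulVec, dotProduct_smul, dotProduct_smul, ← mulVec_mulVec, ← mulVec_mulVec,
    dotProduct_mulVec, dotProduct_mulVec, dotProduct_comm]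
  rfl

end Derivative

lemma sSup_inner_gradient_objective_sub {x z : EuclideanSpace ℝ (S × A)}
    (hx : IsUnit (1 - γ • transitionMatrix K x)) (hocc : 0 ≤ occupancy K γ ρ x)
    (hz : inPolicySimplex z)
    (hgreedy : ∀ w, inPolicySimplex w → advantage K q γ x w ≤ advantage K q γ x z) :
    sSup ((fun w => ⟪gradient (objective K q γ ρ) x, w - x⟫) '' {w | inPolicySimplex w}) =
      occupancy K γ ρ x ⬝ᵥ advantage K q γ x z := by
  rw [(hasGradientAt_objective hx).gradient]
  refine IsGreatest.csSup_eq ⟨⟨z, hz, inner_policyGradient_sub hx z⟩, ?_⟩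
  rintro _ ⟨w, hw, rfl⟩
  exact (inner_policyGradient_sub hx w).trans_le
    (dotProduct_le_dotProduct_of_nonneg_left (hgreedy w hw) hocc)

theorem objective_sub_le_mul_sSup [Nonempty S] [Nonempty A] (hK0 : ∀ s a s', 0 ≤ K s a s')
    (hK1 : ∀ s a, ∑ s', K s a s' = 1) (hγ0 : 0 ≤ γ) (hγ1 : γ < 1) (hρ : ∀ s, 0 < ρ s)
    {x y : EuclideanSpace ℝ (S × A)} (hx : inPolicySimplex x) (hy : inPolicySimplex y) :
    objective K q γ ρ y - objective K q γ ρ x ≤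
      (Finset.univ.sup' Finset.univ_nonempty fun s => occupancy K γ ρ y s / ρ s) *
        sSup ((fun z => ⟪gradient (objective K q γ ρ) x, z - x⟫) '' {z | inPolicySimplex z}) := by
  have hMx := transitionMatrix_mem_colStochastic hK0 hK1 hx
  have hMy := transitionMatrix_mem_colStochastic hK0 hK1 hy
  have hux := isUnit_one_sub_smul_of_mem_colStochastic_s18 hMx hγ0 hγ1
  have huy := isUnit_one_sub_smul_of_mem_colStochastic_s18 hMy hγ0 hγ1
  have hρ0 : 0 ≤ ρ := fun s => (hρ s).le
  have hρx : ρ ≤ occupancy K γ ρ x :=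
    le_inv_one_sub_smul_mulVec_of_mem_colStochastic hMx hγ0 hγ1 hρ0
  have hρy : ρ ≤ occupancy K γ ρ y :=
    le_inv_one_sub_smul_mulVec_of_mem_colStochastic hMy hγ0 hγ1 hρ0
  obtain ⟨z, hz, hgreedy⟩ := exists_greedy_policy (actionValue K q γ (value K q γ x))
  have hadv : ∀ w, inPolicySimplex w → advantage K q γ x w ≤ advantage K q γ x z :=
    fun w hw s => sub_le_sub_right (hgreedy w hw s) _
  have hadv0 : 0 ≤ advantage K q γ x z := advantage_self hux ▸ hadv x hx
  set C := Finset.univ.sup' Finset.univ_nonempty fun s => occupancy K γ ρ y s / ρ s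
  have hle_C : ∀ s, occupancy K γ ρ y s / ρ s ≤ C := fun s =>
    Finset.le_sup' (fun s => occupancy K γ ρ y s / ρ s) (Finset.mem_univ s)
  have hC : occupancy K γ ρ y ≤ C • ρ := fun s => (div_le_iff₀ (hρ s)).mp (hle_C s)
  have hC0 : 0 ≤ C := by
    obtain ⟨s⟩ := ‹Nonempty S›
    exact (div_nonneg (hρ0.trans hρy s) (hρ0 s)).trans (hle_C s)
  rw [objective_sub_objective x huy,
    sSup_inner_gradient_objective_sub hux (hρ0.trans hρx) hz hadv]
  calc occupancy K γ ρ y ⬝ᵥ advantage K q γ x y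
      ≤ occupancy K γ ρ y ⬝ᵥ advantage K q γ x z :=
        dotProduct_le_dotProduct_of_nonneg_left (hadv y hy) (hρ0.trans hρy)
    _ ≤ (C • ρ) ⬝ᵥ advantage K q γ x z := dotProduct_le_dotProduct_of_nonneg_right hC hadv0
    _ = C * (ρ ⬝ᵥ advantage K q γ x z) := smul_dotProduct C ρ _
    _ ≤ C * (occupancy K γ ρ x ⬝ᵥ advantage K q γ x z) :=
        mul_le_mul_of_nonneg_left (dotProduct_le_dotProduct_of_nonneg_right hρx hadv0) hC0

end MDP

section VictimMDP

variable {S Av Aa : Type*} [Fintype Aa]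

def victimKernel (P : S → Av → Aa → S → ℝ) (β : S → Aa → ℝ) (s : S) (a : Av) (s' : S) : ℝ :=
  ∑ aa, β s aa * P s a aa s'

def victimReward (r : S → Av → Aa → ℝ) (β : S → Aa → ℝ) (s : S) (a : Av) : ℝ :=
  ∑ aa, β s aa * r s a aa

lemma victimKernel_nonneg {P : S → Av → Aa → S → ℝ} {β : S → Aa → ℝ}
    (hP0 : ∀ s av aa s', 0 ≤ P s av aa s') (hβ0 : ∀ s a, 0 ≤ β s a) (s : S) (a : Av) (s' : S) :
    0 ≤ victimKernel P β s a s' :=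
  Finset.sum_nonneg fun aa _ => mul_nonneg (hβ0 s aa) (hP0 s a aa s')

lemma sum_victimKernel [Fintype S] {P : S → Av → Aa → S → ℝ} {β : S → Aa → ℝ}
    (hP1 : ∀ s av aa, ∑ s', P s av aa s' = 1) (hβ1 : ∀ s, ∑ a, β s a = 1) (s : S) (a : Av) :
    ∑ s', victimKernel P β s a s' = 1 := by
  simp only [victimKernel, Finset.sum_comm (γ := S), ← Finset.mul_sum, hP1, mul_one, hβ1]

lemma inducedMatrix_eq_transitionMatrix [Fintype Av] (P : S → Av → Aa → S → ℝ) (β : S → Aa → ℝ)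
    (x : EuclideanSpace ℝ (S × Av)) :
    inducedMatrix P (fun s a => x (s, a)) β = MDP.transitionMatrix (victimKernel P β) x := by
  ext s' s
  change ∑ av, ∑ aa, x (s, av) * β s aa * P s av aa s' = ∑ a, x (s, a) * ∑ aa, β s aa * P s a aa s'
  simp only [Finset.mul_sum, mul_assoc]

lemma marginalReward_eq_policyReward [Fintype Av] (r : S → Av → Aa → ℝ) (β : S → Aa → ℝ)
    (x : EuclideanSpace ℝ (S × Av)) :
    marginalReward r (fun s a => x (s, a)) β = MDP.policyReward (victimReward r β) x := by
  ext s
  change ∑ av, ∑ aa, x (s, av) * β s aa * r s av aa = ∑ a, x (s, a) * ∑ aa, β s aa * r s a aa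
  simp only [Finset.mul_sum, mul_assoc]

variable [Fintype S] [DecidableEq S] [Fintype Av]

lemma Jobj_eq_objective (P : S → Av → Aa → S → ℝ) (r : S → Av → Aa → ℝ) (γ ε : ℝ) (ρ : S → ℝ)
    (pihat : S → Aa → ℝ) (x : EuclideanSpace ℝ (S × Av)) (α : EuclideanSpace ℝ (S × Aa)) :
    Jobj P r γ ε ρ pihat x α =
      MDP.objective (victimKernel P fun s a => (1 - ε) * pihat s a + ε * α (s, a))
        (victimReward r fun s a => (1 - ε) * pihat s a + ε * α (s, a)) γ ρ x := by
  rw [Jobj, inducedMatrix_eq_transitionMatrix, marginalReward_eq_policyReward]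
  rfl

lemma stateVisitation_eq_smul_occupancy {P : S → Av → Aa → S → ℝ} {β : S → Aa → ℝ} {γ : ℝ}
    {x : EuclideanSpace ℝ (S × Av)}
    (hM : MDP.transitionMatrix (victimKernel P β) x ∈ colStochastic ℝ S) (hγ0 : 0 ≤ γ)
    (hγ1 : γ < 1) (ρ : S → ℝ) :
    stateVisitation P γ ρ (fun s a => x (s, a)) β =
      (1 - γ) • MDP.occupancy (victimKernel P β) γ ρ x := by
  rw [stateVisitation, inducedMatrix_eq_transitionMatrix,
    (hasSum_geometric_mulVec_of_mem_colStochastic hM hγ0 hγ1 ρ).tsum_eq]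
  rfl

end VictimMDP

theorem victim_gradient_domination_general {S Av Aa : Type*}
    [Fintype S] [Nonempty S] [DecidableEq S]
    [Fintype Av] [Nonempty Av] [Fintype Aa]
    (P : S → Av → Aa → S → ℝ)
    (hP0 : ∀ s av aa s', 0 ≤ P s av aa s')
    (hP1 : ∀ s av aa, ∑ s', P s av aa s' = 1)
    (r : S → Av → Aa → ℝ)
    (γ : ℝ) (hγ0 : 0 ≤ γ) (hγ1 : γ < 1)
    (ρ : S → ℝ) (hρ0 : ∀ s, 0 < ρ s)
    (pihat : S → Aa → ℝ)
    (hpihat0 : ∀ s a, 0 ≤ pihat s a) (hpihat1 : ∀ s, ∑ a, pihat s a = 1)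
    (ε : ℝ) (hε0 : 0 ≤ ε) (hε1 : ε ≤ 1)
    (ν : EuclideanSpace ℝ (S × Av)) (α : EuclideanSpace ℝ (S × Aa))
    (hν : inPolicySimplex ν) (hα : inPolicySimplex α)
    (νstar : EuclideanSpace ℝ (S × Av)) (hνstar : inPolicySimplex νstar) :
    Jobj P r γ ε ρ pihat νstar α - Jobj P r γ ε ρ pihat ν α ≤
      (1 / (1 - γ)) *
        (Finset.univ.sup' Finset.univ_nonempty fun s =>
          stateVisitation P γ ρ (fun s a => νstar (s, a))
            (fun s a => (1 - ε) * pihat s a + ε * α (s, a)) s / ρ s) *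
        sSup ((fun nubar : EuclideanSpace ℝ (S × Av) =>
          ⟪gradient (fun x => Jobj P r γ ε ρ pihat x α) ν, nubar - ν⟫) ''
            {x | inPolicySimplex x}) := by
  set β : S → Aa → ℝ := fun s a => (1 - ε) * pihat s a + ε * α (s, a)
  have hβ0 : ∀ s a, 0 ≤ β s a := fun s a =>
    add_nonneg (mul_nonneg (sub_nonneg.mpr hε1) (hpihat0 s a)) (mul_nonneg hε0 (hα.1 (s, a)))
  have hβ1 : ∀ s, ∑ a, β s a = 1 := fun s => by
    simp only [β, Finset.sum_add_distrib, ← Finset.mul_sum, hpihat1, hα.2]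
    ring
  have hK0 := victimKernel_nonneg hP0 hβ0
  have hK1 := sum_victimKernel hP1 hβ1
  have hvisit : stateVisitation P γ ρ (fun s a => νstar (s, a)) β =
      (1 - γ) • MDP.occupancy (victimKernel P β) γ ρ νstar :=
    stateVisitation_eq_smul_occupancy
      (MDP.transitionMatrix_mem_colStochastic hK0 hK1 hνstar) hγ0 hγ1 ρ
  have hratio : 1 / (1 - γ) * (Finset.univ.sup' Finset.univ_nonempty fun s =>
      stateVisitation P γ ρ (fun s a => νstar (s, a)) β s / ρ s) =
      Finset.univ.sup' Finset.univ_nonempty fun s =>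
        MDP.occupancy (victimKernel P β) γ ρ νstar s / ρ s := by
    have hγ : 0 < 1 - γ := sub_pos.mpr hγ1
    rw [Finset.mul₀_sup' (one_div_pos.mpr hγ).le, hvisit]
    congr 1 with s
    rw [Pi.smul_apply, smul_eq_mul, mul_div_assoc, ← mul_assoc, one_div_mul_cancel hγ.ne', one_mul]
  simp only [Jobj_eq_objective, hratio]
  exact MDP.objective_sub_le_mul_sSup hK0 hK1 hγ0 hγ1 hρ0 hν hνstar

/-- gradient domination for the victim:
`max_{ν'} J(ν',α) - J(ν,α) ≤ (1/(1-γ)) · max_s (d_ρ^{π_ν*, mix(α)}(s)/ρ(s)) ·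
max_{ν̄ ∈ Δ} ⟨∇_ν J(ν,α), ν̄ - ν⟩`, for any maximizer `ν*`. -/
theorem victim_gradient_domination {S Av Aa : Type*}
    [Fintype S] [Nonempty S] [DecidableEq S]
    [Fintype Av] [Nonempty Av] [Fintype Aa] [Nonempty Aa]
    (P : S → Av → Aa → S → ℝ)
    (hP0 : ∀ s av aa s', 0 ≤ P s av aa s')
    (hP1 : ∀ s av aa, ∑ s', P s av aa s' = 1)
    (r : S → Av → Aa → ℝ)
    (hr0 : ∀ s av aa, 0 ≤ r s av aa) (hr1 : ∀ s av aa, r s av aa ≤ 1)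
    (γ : ℝ) (hγ0 : 0 ≤ γ) (hγ1 : γ < 1)
    (ρ : S → ℝ) (hρ0 : ∀ s, 0 < ρ s) (hρ1 : ∑ s, ρ s = 1)
    (pihat : S → Aa → ℝ)
    (hpihat0 : ∀ s a, 0 ≤ pihat s a) (hpihat1 : ∀ s, ∑ a, pihat s a = 1)
    (ε : ℝ) (hε0 : 0 ≤ ε) (hε1 : ε ≤ 1)
    (ν : EuclideanSpace ℝ (S × Av)) (α : EuclideanSpace ℝ (S × Aa))
    (hν : inPolicySimplex ν) (hα : inPolicySimplex α)
    (νstar : EuclideanSpace ℝ (S × Av)) (hνstar : inPolicySimplex νstar)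
    (hνstarMax : ∀ ν' : EuclideanSpace ℝ (S × Av), inPolicySimplex ν' →
      Jobj P r γ ε ρ pihat ν' α ≤ Jobj P r γ ε ρ pihat νstar α) :
    Jobj P r γ ε ρ pihat νstar α - Jobj P r γ ε ρ pihat ν α ≤
      (1 / (1 - γ)) *
        (Finset.univ.sup' Finset.univ_nonempty fun s =>
          stateVisitation P γ ρ (fun s a => νstar (s, a))
            (fun s a => (1 - ε) * pihat s a + ε * α (s, a)) s / ρ s) *
        sSup ((fun nubar : EuclideanSpace ℝ (S × Av) =>
          ⟪gradient (fun x => Jobj P r γ ε ρ pihat x α) ν, nubar - ν⟫) ''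
            {x | inPolicySimplex x}) :=
  victim_gradient_domination_general P hP0 hP1 r γ hγ0 hγ1 ρ hρ0 pihat hpihat0 hpihat1 ε hε0 hε1 ν α
    hν hα νstar hνstar
end
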